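/- arXiv:0812.3025 — 5 statements merged into one kernel-verified Lean document; each statement's English description precedes it below -/
import Mathlib

section
/- Let λ : ℕ → ℝ be a multiplicative function, p' a prime with λ(p') < 0, and A a set of positive integers coprime to p' of positive lower density δ > 0 such that λ(a) ≠ 0 for all a ∈ A. Then the sets {n : λ(n) > 0} and {n : λ(n) < 0} each have lower density at least δ/p'. -/
/-!
For `a ∈ A` exactly one of `λ(a)` and `λ(p'a) = λ(p')λ(a)` is positive and exactly one is negative.
Sending `a` to whichever of `a`, `p'a` has the required sign is injective on `A`, because `p' ∤ a`,
and maps `A ∩ [1, x/p']` into `[1, x]`. So up to `x` there are at least as many integers of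
either sign as there are elements of `A` up to `x/p'`, that is at least about `δ x / p'`.
-/

open Filter Topology

def countIcc (P : ℕ → Prop) [DecidablePred P] (x : ℕ) : ℕ :=
  ((Finset.Icc 1 x).filter P).card

lemma countIcc_le_self (P : ℕ → Prop) [DecidablePred P] (x : ℕ) : countIcc P x ≤ x :=
  (Finset.card_filter_le _ _).trans_eq (by simp)

lemma countIcc_div_le_of_forall_or_mul {A : Set ℕ} [DecidablePred (· ∈ A)] {Q : ℕ → Prop}
    [DecidablePred Q] {p : ℕ} (hA : ∀ a ∈ A, ¬p ∣ a) (hQ : ∀ a ∈ A, Q a ∨ Q (p * a)) (y : ℕ) :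
    countIcc (· ∈ A) (y / p) ≤ countIcc Q y := by
  rcases Nat.eq_zero_or_pos p with rfl | hp
  · simp [countIcc]
  refine Finset.card_le_card_of_injOn (fun a => if Q a then a else p * a) ?_ ?_
  · intro a ha
    simp only [Finset.coe_filter, Finset.mem_Icc, Set.mem_ofPred_eq] at ha ⊢
    obtain ⟨⟨ha1, hay⟩, haA⟩ := ha
    have hpa : p * a ≤ y := mul_comm a p ▸ Nat.mul_le_of_le_div p a y hay
    split_ifs with hQa
    · exact ⟨⟨ha1, hay.trans (Nat.div_le_self y p)⟩, hQa⟩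
    · exact ⟨⟨Nat.one_le_iff_ne_zero.2 (by positivity), hpa⟩, (hQ a haA).resolve_left hQa⟩
  · intro a ha b hb hab
    simp only [Finset.coe_filter, Set.mem_ofPred_eq] at ha hb
    simp only at hab
    split_ifs at hab with hQa hQb hQb
    · exact hab
    · exact absurd (hab ▸ dvd_mul_right p b) (hA a ha.2)
    · exact absurd (hab ▸ dvd_mul_right p a) (hA b hb.2)
    · exact Nat.eq_of_mul_eq_mul_left hp hab

lemma tendsto_natCast_div_div_natCast (p : ℕ) :
    Tendsto (fun y : ℕ => ((y / p : ℕ) : ℝ) / y) atTop (𝓝 (1 / p)) := by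
  have h := (tendsto_nat_floor_mul_div_atTop (a := (1 / p : ℝ)) (by positivity)).comp
    tendsto_natCast_atTop_atTop
  refine h.congr fun y => ?_
  simp only [Function.comp_apply, one_div_mul_eq_div, Nat.floor_div_eq_div]

lemma div_le_liminf_of_le_comp_div {f g : ℕ → ℕ} {p : ℕ} (hp : 0 < p) (hg : ∀ y, g y ≤ y)
    (hfg : ∀ y, f (y / p) ≤ g y) {δ : ℝ} (hδ : δ ≤ liminf (fun x => (f x : ℝ) / x) atTop) :
    δ / p ≤ liminf (fun y => (g y : ℝ) / y) atTop := by
  refine le_of_forall_lt_imp_le_of_dense fun c hc => ?_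
  have hpR : (0 : ℝ) < p := by exact_mod_cast hp
  obtain ⟨d, hcd, hdδ⟩ := exists_between ((lt_div_iff₀ hpR).1 hc)
  have hf_gt : ∀ᶠ y in atTop, d < (f (y / p) : ℝ) / (y / p : ℕ) :=
    (Nat.tendsto_div_const_atTop hp.ne').eventually <| eventually_lt_of_lt_liminf
      (hdδ.trans_le hδ) (isBoundedUnder_of ⟨0, fun x => by positivity⟩)
  have hc_lt : ∀ᶠ y in atTop, c < d * (((y / p : ℕ) : ℝ) / y) :=
    ((tendsto_natCast_div_div_natCast p).const_mul d).eventually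
      (lt_mem_nhds (by rwa [mul_one_div, lt_div_iff₀ hpR]))
  refine le_liminf_of_le (isCoboundedUnder_ge_of_le atTop fun y =>
    div_le_one_of_le₀ (by exact_mod_cast hg y) (Nat.cast_nonneg y)) ?_
  filter_upwards [hf_gt, hc_lt] with y hfy hcy
  calc c ≤ d * (((y / p : ℕ) : ℝ) / y) := hcy.le
    _ ≤ (f (y / p) : ℝ) / (y / p : ℕ) * (((y / p : ℕ) : ℝ) / y) := by gcongr
    _ ≤ (g y : ℝ) / y := by
      rcases eq_or_ne (y / p) 0 with hx | hx
      · rw [hx, Nat.cast_zero, zero_div, mul_zero]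
        positivity
      · rw [div_mul_div_cancel₀ (by exact_mod_cast hx)]
        gcongr
        exact_mod_cast hfg y

lemma div_le_liminf_countIcc_of_forall_or_mul {A : Set ℕ} [DecidablePred (· ∈ A)]
    {Q : ℕ → Prop} [DecidablePred Q] {p : ℕ} (hp : 0 < p) (hA : ∀ a ∈ A, ¬p ∣ a)
    (hQ : ∀ a ∈ A, Q a ∨ Q (p * a)) {δ : ℝ}
    (hδ : δ ≤ liminf (fun x => (countIcc (· ∈ A) x : ℝ) / x) atTop) :
    δ / p ≤ liminf (fun y => (countIcc Q y : ℝ) / y) atTop :=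
  div_le_liminf_of_le_comp_div hp (countIcc_le_self Q)
    (countIcc_div_le_of_forall_or_mul hA hQ) hδ

open Classical in
theorem lower_density_of_same_sign_general (lam : ℕ → ℝ)
    (hmul : ∀ m n : ℕ, Nat.Coprime m n → lam (m * n) = lam m * lam n)
    (p' : ℕ) (hp : p'.Prime) (hneg : lam p' < 0)
    (A : Set ℕ) (hApos : ∀ a ∈ A, 0 < a ∧ Nat.Coprime a p')
    (hAne : ∀ a ∈ A, lam a ≠ 0)
    (δ : ℝ)
    (hdens : δ ≤ Filter.liminf (fun x : ℕ =>
        (((Finset.Icc 1 x).filter (fun n => n ∈ A)).card : ℝ) / (x : ℝ)) Filter.atTop) :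
    δ / (p' : ℝ) ≤ Filter.liminf (fun x : ℕ =>
        (((Finset.Icc 1 x).filter (fun n => 0 < lam n)).card : ℝ) / (x : ℝ)) Filter.atTop ∧
    δ / (p' : ℝ) ≤ Filter.liminf (fun x : ℕ =>
        (((Finset.Icc 1 x).filter (fun n => lam n < 0)).card : ℝ) / (x : ℝ)) Filter.atTop := by
  have hndvd : ∀ a ∈ A, ¬p' ∣ a := fun a ha => hp.coprime_iff_not_dvd.1 (hApos a ha).2.symm
  have hflip : ∀ a ∈ A, lam (p' * a) = lam p' * lam a := fun a ha => hmul p' a (hApos a ha).2.symm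
  constructor
  · refine div_le_liminf_countIcc_of_forall_or_mul hp.pos hndvd (fun a ha => ?_) hdens
    rw [hflip a ha]
    rcases (hAne a ha).lt_or_gt with h | h
    · exact .inr (mul_pos_of_neg_of_neg hneg h)
    · exact .inl h
  · refine div_le_liminf_countIcc_of_forall_or_mul hp.pos hndvd (fun a ha => ?_) hdens
    rw [hflip a ha]
    rcases (hAne a ha).lt_or_gt with h | h
    · exact .inl h
    · exact .inr (mul_neg_of_neg_of_pos hneg h)

open Classical in
theorem lower_density_of_same_sign (lam : ℕ → ℝ) (hone : lam 1 = 1)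
    (hmul : ∀ m n : ℕ, Nat.Coprime m n → lam (m * n) = lam m * lam n)
    (p' : ℕ) (hp : p'.Prime) (hneg : lam p' < 0)
    (A : Set ℕ) (hApos : ∀ a ∈ A, 0 < a ∧ Nat.Coprime a p')
    (hAne : ∀ a ∈ A, lam a ≠ 0)
    (δ : ℝ) (hδ : 0 < δ)
    (hdens : δ ≤ Filter.liminf (fun x : ℕ =>
        (((Finset.Icc 1 x).filter (fun n => n ∈ A)).card : ℝ) / (x : ℝ)) Filter.atTop) :
    δ / (p' : ℝ) ≤ Filter.liminf (fun x : ℕ =>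
        (((Finset.Icc 1 x).filter (fun n => 0 < lam n)).card : ℝ) / (x : ℝ)) Filter.atTop ∧
    δ / (p' : ℝ) ≤ Filter.liminf (fun x : ℕ =>
        (((Finset.Icc 1 x).filter (fun n => lam n < 0)).card : ℝ) / (x : ℝ)) Filter.atTop :=
  lower_density_of_same_sign_general lam hmul p' hp hneg A hApos hAne δ hdens
end

section
/- Let f ∈ H*_k(N) be a primitive holomorphic cusp form of even weight k ≥ 2 and squarefree level N with Hecke eigenvalues λ_f(n). Then there exists a constant c > 0 (depending on f) and x₀ such that for all x ≥ x₀, #{n ≤ x : gcd(n,N)=1, λ_f(n) > 0} ≥ c·x and #{n ≤ x : gcd(n,N)=1, λ_f(n) < 0} ≥ c·x. -/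
/-- An abstraction of a primitive holomorphic cusp form (newform) of weight `k` and
level `N`, recording the standard properties of its normalized Hecke eigenvalues:
normalization, multiplicativity, Deligne's bound, the Atkin–Lehner relations at
primes dividing the level, Serre's zero-density estimate on `λ(p) = 0`, and the
existence of a prime `p ∤ N` with `λ(p) < 0`. -/
structure PrimitiveForm (k N : ℕ) : Type where
  lam : ℕ → ℝ
  lam_one : lam 1 = 1
  mult : ∀ m n : ℕ, Nat.Coprime m n → lam (m * n) = lam m * lam n
  deligne : ∀ n : ℕ, 0 < n → |lam n| ≤ (n.divisors.card : ℝ)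
  level_pow : ∀ p : ℕ, p.Prime → p ∣ N → ∀ ν : ℕ, lam (p ^ ν) = (lam p) ^ ν
  level_sq : ∀ p : ℕ, p.Prime → p ∣ N → (lam p) ^ 2 = 1 / (p : ℝ)
  serre : ∀ δ : ℝ, δ < 1 / 2 → ∃ Cf > (0 : ℝ), ∀ x : ℕ, 2 ≤ x →
      (((Finset.Icc 1 x).filter (fun p => p.Prime ∧ lam p = 0)).card : ℝ)
        ≤ Cf * (x : ℝ) / (Real.log x) ^ ((1 : ℝ) + δ)
  exists_neg : ∃ p : ℕ, p.Prime ∧ ¬ p ∣ N ∧ lam p < 0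

/-
Fix a prime `q ∤ N` with `λ(q) < 0`. Serre's estimate makes `∑ 1/p` over the primes with
`λ(p) = 0` converge, so after putting the finitely many such primes that carry most of this sum
into a modulus `W` divisible by `qN`, a sieve over `n ≡ 1 (mod W)` shows that a positive
proportion of integers are squarefree, coprime to `qN` and free of such primes; by
multiplicativity `λ(n) ≠ 0` for all of them. Sending `n` to `n` or to `qn` according to the sign
of `λ(n)` injects them into the integers of either prescribed sign.
-/

open Finset Real Filter

lemma card_filter_Icc_le_div_add_one {x m : ℕ} {P : ℕ → Prop} [DecidablePred P]
    (hP : ∀ a b, P a → P b → a ≡ b [MOD m]) : #{n ∈ Icc 1 x | P n} ≤ x / m + 1 := by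
  simpa using card_le_card_of_injOn (t := range (x / m + 1)) (· / m)
    (fun n hn => by
      simp only [coe_filter, mem_Icc, Set.mem_ofPred_eq] at hn
      simpa [Nat.lt_succ_iff] using Nat.div_le_div_right hn.1.2)
    (fun a ha b hb hab => by
      simp only [coe_filter, mem_Icc, Set.mem_ofPred_eq] at ha hb
      rw [← Nat.div_add_mod a m, ← Nat.div_add_mod b m, show a / m = b / m from hab,
        hP a b ha.2 hb.2])

lemma div_le_card_filter_modEq_one (x m : ℕ) : x / m ≤ #{n ∈ Icc 1 x | n ≡ 1 [MOD m]} := by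
  simpa using card_le_card_of_injOn (s := range (x / m)) (fun k => k * m + 1)
    (fun k hk => by
      have hkm : (k + 1) * m ≤ x := Nat.mul_le_of_le_div _ _ _ (mem_range.mp hk)
      have hm : 1 ≤ m := Nat.pos_of_ne_zero fun h => by simp [h] at hk
      simp only [coe_filter, mem_Icc, Set.mem_ofPred_eq]
      exact ⟨⟨by omega, by nlinarith⟩, by simp [Nat.ModEq, Nat.add_mod]⟩)
    (fun a _ b _ hab => by
      rcases Nat.eq_zero_or_pos m with rfl | hm
      · simp_all
      · exact Nat.eq_of_mul_eq_mul_right hm (by simpa using hab))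

lemma card_filter_modEq_one_dvd_le {x m d : ℕ} (h : Nat.Coprime m d) :
    (#{n ∈ Icc 1 x | n ≡ 1 [MOD m] ∧ d ∣ n} : ℝ) ≤ x / (m * d) + 1 := by
  have hcard : #{n ∈ Icc 1 x | n ≡ 1 [MOD m] ∧ d ∣ n} ≤ x / (m * d) + 1 :=
    card_filter_Icc_le_div_add_one fun a b ha hb =>
      (Nat.modEq_and_modEq_iff_modEq_mul h).mp
        ⟨ha.1.trans hb.1.symm, (Nat.modEq_zero_iff_dvd.mpr ha.2).trans
          (Nat.modEq_zero_iff_dvd.mpr hb.2).symm⟩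
  calc (#{n ∈ Icc 1 x | n ≡ 1 [MOD m] ∧ d ∣ n} : ℝ) ≤ ((x / (m * d) : ℕ) : ℝ) + 1 := by
        exact_mod_cast hcard
    _ ≤ x / (m * d) + 1 := by grw [Nat.cast_div_le]; push_cast; rfl

lemma sum_one_div_sq_le_two_thirds {s : Finset ℕ} (hs : ∀ n ∈ s, 2 ≤ n) :
    ∑ n ∈ s, 1 / (n : ℝ) ^ 2 ≤ 2 / 3 := by
  have h1 : 1 ∉ s := fun h => by simpa using hs 1 h
  have hle : ∑ n ∈ insert 1 s, 1 / (n : ℝ) ^ 2 ≤ π ^ 2 / 6 :=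
    hasSum_zeta_two.summable.sum_le_tsum _ (fun _ _ => by positivity) |>.trans_eq
      hasSum_zeta_two.tsum_eq
  rw [sum_insert h1] at hle
  nlinarith [pi_lt_d2, pi_pos]

lemma sum_range_two_pow {M : Type*} [AddCommMonoid M] (f : ℕ → M) (n : ℕ) :
    ∑ i ∈ range (2 ^ n), f i = f 0 + ∑ j ∈ range n, ∑ i ∈ Ico (2 ^ j) (2 ^ (j + 1)), f i := by
  induction n with
  | zero => simp
  | succ n ih =>
    rw [← sum_range_add_sum_Ico _ (Nat.pow_le_pow_right two_pos n.le_succ), ih, sum_range_succ,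
      add_assoc]

lemma sum_Ico_two_pow_indicator_one_div_le (Z : ℕ → Prop) [DecidablePred Z] (j : ℕ) :
    ∑ i ∈ Ico (2 ^ j) (2 ^ (j + 1)), {n | Z n}.indicator (fun n : ℕ => 1 / (n : ℝ)) i
      ≤ #{n ∈ Icc 1 (2 ^ (j + 1)) | Z n} / 2 ^ j := by
  calc ∑ i ∈ Ico (2 ^ j) (2 ^ (j + 1)), {n | Z n}.indicator (fun n : ℕ => 1 / (n : ℝ)) i
      ≤ ∑ i ∈ Ico (2 ^ j) (2 ^ (j + 1)), {n | Z n}.indicator (fun _ => 1 / (2 : ℝ) ^ j) i := by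
        refine sum_le_sum fun i hi => Set.indicator_le_indicator ?_
        gcongr
        exact_mod_cast (mem_Ico.mp hi).1
    _ = #{n ∈ Ico (2 ^ j) (2 ^ (j + 1)) | Z n} / 2 ^ j := by
        simp [Set.indicator_apply, sum_ite, div_eq_mul_inv]
    _ ≤ #{n ∈ Icc 1 (2 ^ (j + 1)) | Z n} / 2 ^ j := by
        gcongr
        intro i hi
        have := mem_Ico.mp hi
        exact mem_Icc.mpr ⟨le_trans Nat.one_le_two_pow this.1, this.2.le⟩

lemma summable_indicator_one_div_of_card_le {Z : ℕ → Prop} [DecidablePred Z] {C δ : ℝ}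
    (hδ : 0 < δ) (hZ : ∀ x : ℕ, 2 ≤ x →
      (#{n ∈ Icc 1 x | Z n} : ℝ) ≤ C * (x : ℝ) / (Real.log x) ^ ((1 : ℝ) + δ)) :
    Summable ({n | Z n}.indicator fun n : ℕ => 1 / (n : ℝ)) := by
  set g := {n | Z n}.indicator fun n : ℕ => 1 / (n : ℝ)
  have hg : ∀ n, 0 ≤ g n := fun n => Set.indicator_nonneg (fun _ _ => by positivity) n
  set b : ℕ → ℝ := fun j => ∑ i ∈ Ico (2 ^ j) (2 ^ (j + 1)), g i
  have hb_le : ∀ j, b j ≤ 2 * C / Real.log 2 ^ (1 + δ) * (1 / ((j : ℝ) + 1) ^ (1 + δ)) := by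
    intro j
    have hlog : Real.log ((2 ^ (j + 1) : ℕ) : ℝ) = ((j : ℝ) + 1) * Real.log 2 := by
      push_cast; rw [Real.log_pow]; push_cast; ring
    refine (sum_Ico_two_pow_indicator_one_div_le Z j).trans ?_
    have := hZ (2 ^ (j + 1)) (Nat.one_lt_two_pow (Nat.succ_ne_zero j))
    rw [hlog, Real.mul_rpow (by positivity) (Real.log_pos one_lt_two).le] at this
    calc (#{n ∈ Icc 1 (2 ^ (j + 1)) | Z n} : ℝ) / 2 ^ j
        ≤ C * ((2 ^ (j + 1) : ℕ) : ℝ) / (((j : ℝ) + 1) ^ (1 + δ) * Real.log 2 ^ (1 + δ))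
          / 2 ^ j := by gcongr
      _ = _ := by push_cast; field_simp; ring
  have hb : Summable b := by
    refine Summable.of_nonneg_of_le (fun j => sum_nonneg fun i _ => hg i) hb_le
      (Summable.mul_left _ ?_)
    refine ((Real.summable_one_div_nat_add_rpow 1 (1 + δ)).mpr (by linarith)).congr fun j => ?_
    rw [abs_of_nonneg (by positivity)]
  refine summable_of_sum_range_le (c := ∑' j, b j) hg fun n => ?_
  calc ∑ i ∈ range n, g i ≤ ∑ i ∈ range (2 ^ n), g i :=
        sum_le_sum_of_subset_of_nonneg (range_subset_range.mpr Nat.lt_two_pow_self.le)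
          fun i _ _ => hg i
    _ = ∑ j ∈ range n, b j := by simp [g, b, sum_range_two_pow]
    _ ≤ ∑' j, b j := hb.sum_le_tsum _ fun j _ => sum_nonneg fun i _ => hg i

section SummableReciprocals

variable {Z : ℕ → Prop} (hZ : Summable ({n | Z n}.indicator fun n : ℕ => 1 / (n : ℝ)))
include hZ

lemma exists_sum_one_div_lt_of_summable {ε : ℝ} (hε : 0 < ε) :
    ∃ s : Finset ℕ, ∀ t : Finset ℕ, Disjoint t s → (∀ n ∈ t, Z n) → ∑ n ∈ t, 1 / (n : ℝ) < ε := by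
  obtain ⟨s, hs⟩ := hZ.vanishing (Iio_mem_nhds hε)
  refine ⟨s, fun t hts htZ => ?_⟩
  have := hs t hts
  rwa [Set.mem_Iio,
    sum_congr rfl fun n hn => Set.indicator_of_mem (s := {n | Z n}) (htZ n hn) _] at this

lemma exists_card_filter_le_of_summable [DecidablePred Z] {ε : ℝ} (hε : 0 < ε) :
    ∃ C : ℕ, ∀ x : ℕ, (#{n ∈ Icc 1 x | Z n} : ℝ) ≤ C + ε * x := by
  obtain ⟨s, hs⟩ := exists_sum_one_div_lt_of_summable hZ hε
  refine ⟨#s, fun x => ?_⟩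
  set t := {n ∈ Icc 1 x | Z n}
  have htail : (#(t \ s) : ℝ) ≤ ε * x := by
    have hmem : ∀ n ∈ t \ s, 1 ≤ n ∧ n ≤ x ∧ Z n := fun n hn => by
      obtain ⟨hnI, hnZ⟩ := mem_filter.mp (mem_sdiff.mp hn).1
      exact ⟨(mem_Icc.mp hnI).1, (mem_Icc.mp hnI).2, hnZ⟩
    have hsum := hs (t \ s) sdiff_disjoint fun n hn => (hmem n hn).2.2
    calc (#(t \ s) : ℝ) = ∑ n ∈ t \ s, (1 : ℝ) := by simp
      _ ≤ ∑ n ∈ t \ s, x * (1 / (n : ℝ)) := sum_le_sum fun n hn => by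
          obtain ⟨hn1, hnx, -⟩ := hmem n hn
          rw [mul_one_div, le_div_iff₀ (by positivity), one_mul]
          exact_mod_cast hnx
      _ = x * ∑ n ∈ t \ s, 1 / (n : ℝ) := (mul_sum ..).symm
      _ ≤ ε * x := by rw [mul_comm ε]; gcongr
  have : #t ≤ #(t \ s) + #s := card_le_card_sdiff_add_card
  have : (#t : ℝ) ≤ #(t \ s) + #s := by exact_mod_cast this
  linarith

end SummableReciprocals

section Sieve

variable (W x : ℕ) (Z : ℕ → Prop) [DecidablePred Z]

lemma not_dvd_of_modEq_one {n p : ℕ} (hn : n ≡ 1 [MOD W]) (hp : p.Prime) (hpn : p ∣ n) :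
    ¬ p ∣ W := fun hpW =>
  hp.one_lt.ne' (Nat.eq_one_of_dvd_coprimes (Nat.coprime_of_mul_modEq_one 1 (by simpa using hn))
    hpn hpW)

lemma filter_modEq_one_subset :
    {n ∈ Icc 1 x | n ≡ 1 [MOD W]} ⊆
      {n ∈ Icc 1 x | n ≡ 1 [MOD W] ∧ Squarefree n ∧ ∀ p ∈ n.primeFactors, ¬ Z p} ∪
      ({p ∈ Icc 1 (Nat.sqrt x) | p.Prime ∧ ¬ p ∣ W}.biUnion
        fun p => {n ∈ Icc 1 x | n ≡ 1 [MOD W] ∧ p ^ 2 ∣ n}) ∪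
      ({p ∈ Icc 1 x | p.Prime ∧ Z p ∧ ¬ p ∣ W}.biUnion
        fun p => {n ∈ Icc 1 x | n ≡ 1 [MOD W] ∧ p ∣ n}) := by
  intro n hn
  simp only [mem_filter, mem_Icc] at hn
  obtain ⟨⟨hn1, hnx⟩, hnW⟩ := hn
  simp only [mem_union, mem_biUnion, mem_filter, mem_Icc]
  by_cases hsq : Squarefree n
  · by_cases hZ : ∃ p, p.Prime ∧ p ∣ n ∧ Z p
    · obtain ⟨p, hp, hpn, hpZ⟩ := hZ
      exact Or.inr ⟨p, ⟨⟨hp.one_lt.le, (Nat.le_of_dvd (by omega) hpn).trans hnx⟩, hp, hpZ,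
        not_dvd_of_modEq_one W hnW hp hpn⟩, ⟨hn1, hnx⟩, hnW, hpn⟩
    · simp only [not_exists, not_and] at hZ
      exact Or.inl (Or.inl ⟨⟨hn1, hnx⟩, hnW, hsq, fun p hp =>
        hZ p (Nat.prime_of_mem_primeFactors hp) (Nat.dvd_of_mem_primeFactors hp)⟩)
  · obtain ⟨p, hp, hp2⟩ : ∃ p, p.Prime ∧ p * p ∣ n := by
      simpa [Nat.squarefree_iff_prime_squarefree] using hsq
    have hpx : p * p ≤ x := (Nat.le_of_dvd (by omega) hp2).trans hnx
    exact Or.inl (Or.inr ⟨p, ⟨⟨hp.one_lt.le, Nat.le_sqrt.mpr hpx⟩, hp,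
      not_dvd_of_modEq_one W hnW hp (dvd_of_mul_right_dvd hp2)⟩, ⟨hn1, hnx⟩, hnW, sq p ▸ hp2⟩)

lemma card_biUnion_filter_modEq_one_dvd_le {P : Finset ℕ} (e : ℕ → ℕ)
    (he : ∀ p ∈ P, Nat.Coprime W (e p)) :
    (#(P.biUnion fun p => {n ∈ Icc 1 x | n ≡ 1 [MOD W] ∧ e p ∣ n}) : ℝ)
      ≤ x / W * ∑ p ∈ P, 1 / (e p : ℝ) + #P := by
  calc (#(P.biUnion fun p => {n ∈ Icc 1 x | n ≡ 1 [MOD W] ∧ e p ∣ n}) : ℝ)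
      ≤ ∑ p ∈ P, (#{n ∈ Icc 1 x | n ≡ 1 [MOD W] ∧ e p ∣ n} : ℝ) := by
        exact_mod_cast card_biUnion_le
    _ ≤ ∑ p ∈ P, ((x : ℝ) / (W * e p) + 1) :=
        sum_le_sum fun p hp => card_filter_modEq_one_dvd_le (he p hp)
    _ = x / W * ∑ p ∈ P, 1 / (e p : ℝ) + #P := by
        simp only [sum_add_distrib, sum_const, nsmul_eq_mul, mul_one, mul_sum]
        exact congrArg (· + _) (sum_congr rfl fun p _ => by ring)

lemma le_card_filter_modEq_one_squarefree :
    (x : ℝ) / W * (1 / 3 - ∑ p ∈ {p ∈ Icc 1 x | p.Prime ∧ Z p ∧ ¬ p ∣ W}, 1 / (p : ℝ)) - 1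
        - Nat.sqrt x - #{p ∈ Icc 1 x | p.Prime ∧ Z p ∧ ¬ p ∣ W}
      ≤ #{n ∈ Icc 1 x | n ≡ 1 [MOD W] ∧ Squarefree n ∧ ∀ p ∈ n.primeFactors, ¬ Z p} := by
  set P₁ := {p ∈ Icc 1 (Nat.sqrt x) | p.Prime ∧ ¬ p ∣ W}
  set P₂ := {p ∈ Icc 1 x | p.Prime ∧ Z p ∧ ¬ p ∣ W}
  have coprime_of_not_dvd {p : ℕ} (hp : p.Prime) (hpW : ¬ p ∣ W) : Nat.Coprime W p :=
    (hp.coprime_iff_not_dvd.mpr hpW).symm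
  have hA : (x : ℝ) / W - 1 ≤ #{n ∈ Icc 1 x | n ≡ 1 [MOD W]} := by
    have := Nat.sub_one_lt_floor ((x : ℝ) / W)
    rw [Nat.floor_div_eq_div] at this
    exact this.le.trans (by exact_mod_cast div_le_card_filter_modEq_one x W)
  have hcover : (#{n ∈ Icc 1 x | n ≡ 1 [MOD W]} : ℝ) ≤
      #{n ∈ Icc 1 x | n ≡ 1 [MOD W] ∧ Squarefree n ∧ ∀ p ∈ n.primeFactors, ¬ Z p}
        + #(P₁.biUnion fun p => {n ∈ Icc 1 x | n ≡ 1 [MOD W] ∧ p ^ 2 ∣ n})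
        + #(P₂.biUnion fun p => {n ∈ Icc 1 x | n ≡ 1 [MOD W] ∧ p ∣ n}) := by
    exact_mod_cast (card_le_card (filter_modEq_one_subset W x Z)).trans
      ((card_union_le _ _).trans (Nat.add_le_add_right (card_union_le _ _) _))
  have h₁ := card_biUnion_filter_modEq_one_dvd_le W x (P := P₁) (· ^ 2) fun p hp =>
    (coprime_of_not_dvd (mem_filter.mp hp).2.1 (mem_filter.mp hp).2.2).pow_right 2
  have h₂ := card_biUnion_filter_modEq_one_dvd_le W x (P := P₂) id fun p hp =>
    coprime_of_not_dvd (mem_filter.mp hp).2.1 (mem_filter.mp hp).2.2.2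
  have hP₁_sum : ∑ p ∈ P₁, 1 / ((p ^ 2 : ℕ) : ℝ) ≤ 2 / 3 := by
    push_cast
    exact sum_one_div_sq_le_two_thirds fun p hp => (mem_filter.mp hp).2.1.two_le
  have hP₁_card : (#P₁ : ℝ) ≤ Nat.sqrt x := by
    exact_mod_cast (card_filter_le _ _).trans (by simp)
  have := mul_le_mul_of_nonneg_left hP₁_sum (by positivity : (0 : ℝ) ≤ x / W)
  simp only [id] at h₂
  linarith

end Sieve

theorem exists_pos_density_squarefree_coprime_avoiding {Z : ℕ → Prop} [DecidablePred Z]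
    (hZ : Summable ({n | Z n}.indicator fun n : ℕ => 1 / (n : ℝ))) {M : ℕ} (hM : M ≠ 0) :
    ∃ c > (0 : ℝ), ∃ x₀ : ℕ, ∀ x ≥ x₀, c * x ≤
      #{n ∈ Icc 1 x | Nat.Coprime n M ∧ Squarefree n ∧ ∀ p ∈ n.primeFactors, ¬ Z p} := by
  obtain ⟨s, hs⟩ := exists_sum_one_div_lt_of_summable hZ (by norm_num : (0 : ℝ) < 1 / 8)
  set W := M * ∏ p ∈ s with p.Prime, p
  have hW : 0 < W := Nat.pos_of_ne_zero <|
    mul_ne_zero hM (prod_ne_zero_iff.mpr fun p hp => (mem_filter.mp hp).2.ne_zero)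
  obtain ⟨C, hC⟩ := exists_card_filter_le_of_summable hZ (by positivity : (0 : ℝ) < 1 / (64 * W))
  refine ⟨1 / (8 * W), by positivity, max ((64 * W) ^ 2) (64 * W * (C + 1)), fun x hx => ?_⟩
  set P := {p ∈ Icc 1 x | p.Prime ∧ Z p ∧ ¬ p ∣ W}
  have hP_sum : ∑ p ∈ P, 1 / (p : ℝ) < 1 / 8 := by
    refine hs P (disjoint_left.mpr fun p hp hps => (mem_filter.mp hp).2.2.2 ?_)
      fun p hp => (mem_filter.mp hp).2.2.1
    exact dvd_mul_of_dvd_right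
      (dvd_prod_of_mem _ (mem_filter.mpr ⟨hps, (mem_filter.mp hp).2.1⟩)) M
  have hP_card : (#P : ℝ) ≤ C + x / W / 64 := by
    have : #P ≤ #{n ∈ Icc 1 x | Z n} :=
      card_le_card (monotone_filter_right _ fun _ _ hp => hp.2.1)
    calc (#P : ℝ) ≤ #{n ∈ Icc 1 x | Z n} := by exact_mod_cast this
      _ ≤ C + 1 / (64 * W) * x := hC x
      _ = C + x / W / 64 := by ring
  have hx_sqrt : (Nat.sqrt x : ℝ) ≤ x / W / 64 := by
    have h64 : 64 * W ≤ Nat.sqrt x := Nat.le_sqrt'.mpr (le_of_max_le_left hx)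
    have : Nat.sqrt x * (64 * W) ≤ x :=
      (Nat.mul_le_mul_left _ h64).trans (by simpa [sq] using Nat.sqrt_le' x)
    rw [div_div, le_div_iff₀ (by positivity)]
    exact_mod_cast (by linarith : Nat.sqrt x * (W * 64) ≤ x)
  have hx_C : (C : ℝ) + 1 ≤ x / W / 64 := by
    rw [div_div, le_div_iff₀ (by positivity)]
    exact_mod_cast (by linarith [le_of_max_le_right hx] : (C + 1) * (W * 64) ≤ x)
  have hgood : {n ∈ Icc 1 x | n ≡ 1 [MOD W] ∧ Squarefree n ∧ ∀ p ∈ n.primeFactors, ¬ Z p} ⊆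
      {n ∈ Icc 1 x | Nat.Coprime n M ∧ Squarefree n ∧ ∀ p ∈ n.primeFactors, ¬ Z p} :=
    monotone_filter_right _ fun n _ hn =>
      ⟨(Nat.coprime_of_mul_modEq_one 1 (by simpa using hn.1)).coprime_dvd_right
        (dvd_mul_right M _), hn.2⟩
  have := mul_le_mul_of_nonneg_left hP_sum.le (by positivity : (0 : ℝ) ≤ x / W)
  -- the sieve leaves `x / W * (1/3 - 1/8) - 3 * x / (64 * W) ≥ x / (8 * W)`
  calc 1 / (8 * W) * (x : ℝ)
      ≤ x / W * (1 / 3 - ∑ p ∈ P, 1 / (p : ℝ)) - 1 - Nat.sqrt x - #P := by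
        rw [show 1 / (8 * W) * (x : ℝ) = x / W / 8 by ring]
        nlinarith
    _ ≤ _ := le_card_filter_modEq_one_squarefree W x Z
    _ ≤ _ := by exact_mod_cast card_le_card hgood

lemma map_ne_zero_of_squarefree {M₀ : Type*} [CommMonoidWithZero M₀] [NoZeroDivisors M₀]
    [Nontrivial M₀] {f : ℕ → M₀} (h_mult : ∀ m n, Nat.Coprime m n → f (m * n) = f m * f n)
    (h_one : f 1 = 1) {n : ℕ} (hn : Squarefree n) (hp : ∀ p ∈ n.primeFactors, f p ≠ 0) :
    f n ≠ 0 := by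
  rw [Nat.multiplicative_factorization f h_mult h_one hn.ne_zero, Finsupp.prod]
  refine prod_ne_zero_iff.mpr fun p hp' => ?_
  have h1 : n.factorization p = 1 :=
    le_antisymm (hn.natFactorization_le_one p) (Finsupp.mem_support_iff.mp hp' |>.bot_lt)
  rw [h1, pow_one]
  exact hp p (Nat.support_factorization n ▸ hp')

lemma sign_mul_eq_of_sign_ne {a b : ℝ} (ha : a < 0) (hb : b ≠ 0) {s : SignType} (hs : s ≠ 0)
    (hbs : SignType.sign b ≠ s) : SignType.sign (a * b) = s := by
  rw [sign_mul, sign_neg ha]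
  rcases lt_or_gt_of_ne hb with hb | hb
  · rw [sign_neg hb] at hbs ⊢; cases s <;> simp_all
  · rw [sign_pos hb] at hbs ⊢; cases s <;> simp_all

lemma card_filter_le_card_filter_sign_eq {lam : ℕ → ℝ}
    (h_mult : ∀ m n, Nat.Coprime m n → lam (m * n) = lam m * lam n) {q N x y : ℕ} (hq : 1 < q)
    (hq_neg : lam q < 0) (hqN : Nat.Coprime q N) (hxy : q * y ≤ x) {P : ℕ → Prop}
    [DecidablePred P] (hP : ∀ n, P n → Nat.Coprime n q ∧ Nat.Coprime n N ∧ lam n ≠ 0)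
    {s : SignType} (hs : s ≠ 0) :
    #{n ∈ Icc 1 y | P n} ≤ #{n ∈ Icc 1 x | Nat.Coprime n N ∧ SignType.sign (lam n) = s} := by
  have hyx : y ≤ x := le_trans (Nat.le_mul_of_pos_left y (by omega)) hxy
  refine card_le_card_of_injOn (fun n => if SignType.sign (lam n) = s then n else q * n)
    (fun n hn => ?_) (fun a ha b hb hab => ?_)
  · simp only [coe_filter, mem_Icc, Set.mem_ofPred_eq] at hn ⊢
    obtain ⟨⟨hn1, hny⟩, hnP⟩ := hn
    obtain ⟨hnq, hnN, hn0⟩ := hP n hnP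
    split_ifs with hsn
    · exact ⟨⟨hn1, hny.trans hyx⟩, hnN, hsn⟩
    · refine ⟨⟨by nlinarith, (Nat.mul_le_mul_left q hny).trans hxy⟩,
        Nat.Coprime.mul_left hqN hnN, ?_⟩
      rw [h_mult q n hnq.symm]
      exact sign_mul_eq_of_sign_ne hq_neg hn0 hs hsn
  · simp only [coe_filter, mem_Icc, Set.mem_ofPred_eq] at ha hb hab
    have haq := (hP a ha.2).1
    have hbq := (hP b hb.2).1
    have not_dvd : ∀ n, Nat.Coprime n q → ¬ q ∣ n := fun n hn h =>
      (Nat.Coprime.eq_one_of_dvd hn.symm h ▸ hq).false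
    split_ifs at hab
    · exact hab
    · exact absurd ⟨b, hab⟩ (not_dvd a haq)
    · exact absurd ⟨a, hab.symm⟩ (not_dvd b hbq)
    · exact Nat.eq_of_mul_eq_mul_left (by omega) hab

lemma div_two_mul_le_cast_div {x q : ℕ} (h : q ≤ x) : (x : ℝ) / (2 * q) ≤ (x / q : ℕ) := by
  rcases Nat.eq_zero_or_pos q with rfl | hq
  · simp
  have hlt : x < q * (x / q + 1) := Nat.lt_mul_div_succ x hq
  have h1 : 1 ≤ x / q := (Nat.one_le_div_iff hq).mpr h
  rw [div_le_iff₀ (by positivity)]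
  have : (x : ℝ) < q * ((x / q : ℕ) + 1) := by exact_mod_cast hlt
  have : (1 : ℝ) ≤ (x / q : ℕ) := by exact_mod_cast h1
  nlinarith

theorem positive_proportion_of_each_sign_general (k N : ℕ)
    (hN : Squarefree N) (f : PrimitiveForm k N) :
    ∃ c > (0 : ℝ), ∃ x₀ : ℕ, ∀ x : ℕ, x₀ ≤ x →
      c * (x : ℝ) ≤ (((Finset.Icc 1 x).filter
          (fun n => Nat.Coprime n N ∧ 0 < f.lam n)).card : ℝ) ∧
      c * (x : ℝ) ≤ (((Finset.Icc 1 x).filter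
          (fun n => Nat.Coprime n N ∧ f.lam n < 0)).card : ℝ) := by
  obtain ⟨q, hq, hqN, hq_neg⟩ := f.exists_neg
  obtain ⟨C, -, hC⟩ := f.serre (1 / 4) (by norm_num)
  obtain ⟨c, hc, x₀, hx₀⟩ := exists_pos_density_squarefree_coprime_avoiding
    (summable_indicator_one_div_of_card_le (by norm_num) hC) (mul_ne_zero hq.ne_zero hN.ne_zero)
  have hgood (n : ℕ) (hn : Nat.Coprime n (q * N) ∧ Squarefree n ∧
      ∀ p ∈ n.primeFactors, ¬ (p.Prime ∧ f.lam p = 0)) :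
      Nat.Coprime n q ∧ Nat.Coprime n N ∧ f.lam n ≠ 0 :=
    ⟨Nat.Coprime.coprime_mul_right_right hn.1, Nat.Coprime.coprime_mul_left_right hn.1,
      map_ne_zero_of_squarefree f.mult f.lam_one hn.2.1 fun p hp h =>
        hn.2.2 p hp ⟨Nat.prime_of_mem_primeFactors hp, h⟩⟩
  refine ⟨c / (2 * q), div_pos hc (by have := hq.pos; positivity), q * (x₀ + 1), fun x hx => ?_⟩
  have hx_good : c / (2 * q) * x ≤ #{n ∈ Icc 1 (x / q) | Nat.Coprime n (q * N) ∧ Squarefree n ∧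
      ∀ p ∈ n.primeFactors, ¬ (p.Prime ∧ f.lam p = 0)} :=
    calc c / (2 * q) * x = c * (x / (2 * q)) := by ring
      _ ≤ c * (x / q : ℕ) := by gcongr; exact div_two_mul_le_cast_div (by nlinarith)
      _ ≤ _ := hx₀ _ ((Nat.le_div_iff_mul_le hq.pos).mpr (by nlinarith))
  have h_sign {s : SignType} (hs : s ≠ 0) := card_filter_le_card_filter_sign_eq f.mult hq.one_lt
    hq_neg (hq.coprime_iff_not_dvd.mpr hqN) (Nat.mul_div_le x q) hgood hs
  exact ⟨hx_good.trans (by simpa [sign_eq_one_iff] using h_sign one_ne_zero),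
    hx_good.trans (by simpa [sign_eq_neg_one_iff] using h_sign (s := -1) (by decide))⟩

theorem positive_proportion_of_each_sign (k N : ℕ) (hk : Even k) (hk2 : 2 ≤ k)
    (hN : Squarefree N) (f : PrimitiveForm k N) :
    ∃ c > (0 : ℝ), ∃ x₀ : ℕ, ∀ x : ℕ, x₀ ≤ x →
      c * (x : ℝ) ≤ (((Finset.Icc 1 x).filter
          (fun n => Nat.Coprime n N ∧ 0 < f.lam n)).card : ℝ) ∧
      c * (x : ℝ) ≤ (((Finset.Icc 1 x).filter
          (fun n => Nat.Coprime n N ∧ f.lam n < 0)).card : ℝ) :=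
  positive_proportion_of_each_sign_general k N hN f
end

section
/- In the notation of the previous exercise, if β = 1 then r_1 = (τ/(2√2)) + O(min(1, 1/α²)), with an absolute implied constant; more precisely |r_1 − (τ/2)cos(4πt − π/4)| ≤ w(2α) + (1/2)w(4α) ≤ 3/(2π²α²) for α ≥ 1, and cos(4πt − π/4) = 1/√2 for integer t. -/
/-!
Because `t` is an integer the phase `4πt` drops out, and with `ξ = 2α` the integrand becomes
`(1 - |u|) (1 + τ cos 2πξu) cos (2πξu - π/4)`. The product-to-sum formula splits it into
Fejér-kernel integrals of `cos (2πηu - π/4)` for `η = ξ, 2ξ, 0`; since the kernel is even with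
Fourier transform `w`, each equals `cos (π/4) w(η)`. The `η = 0` term is the main term
`τ/(2√2)`, and the rest is controlled by `|cos| ≤ 1` and `w(η) ≤ 1/(πη)²`.
-/

/-- The Fourier transform of the Fejér kernel `u ↦ 1 - |u|` on `[-1,1]`. -/
noncomputable def w (ξ : ℝ) : ℝ :=
  if ξ = 0 then 1 else (Real.sin (Real.pi * ξ) / (Real.pi * ξ)) ^ 2

open Real intervalIntegral

@[simp] theorem w_zero : w 0 = 1 := if_pos rfl

theorem w_nonneg (ξ : ℝ) : 0 ≤ w ξ := by
  unfold w; split_ifs <;> positivity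

theorem w_le_inv_sq {ξ : ℝ} (hξ : ξ ≠ 0) : w ξ ≤ 1 / (π * ξ) ^ 2 := by
  rw [w, if_neg hξ, div_pow]
  gcongr
  exact sin_sq_le_one _

theorem integral_neg_to_self_eq_integral_add_comp_neg {E : Type*} [NormedAddCommGroup E]
    [NormedSpace ℝ E] {f : ℝ → E} (hf : Continuous f) (a : ℝ) :
    ∫ x in -a..a, f x = ∫ x in 0..a, (f x + f (-x)) := by
  have hneg : Continuous fun x => f (-x) := by fun_prop
  rw [integral_add (hf.intervalIntegrable _ _) (hneg.intervalIntegrable _ _),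
    integral_comp_neg, neg_zero, add_comm,
    integral_add_adjacent_intervals (hf.intervalIntegrable _ _) (hf.intervalIntegrable _ _)]

theorem integral_one_sub_mul_cos (ξ : ℝ) :
    ∫ u in (0:ℝ)..1, (1 - u) * cos (2 * π * ξ * u) = w ξ / 2 := by
  rcases eq_or_ne ξ 0 with rfl | hξ
  · simp only [mul_zero, zero_mul, cos_zero, mul_one]
    rw [integral_sub intervalIntegrable_const intervalIntegral.intervalIntegrable_id]
    norm_num [w]
  · set c := 2 * π * ξ with hc
    have hc0 : c ≠ 0 := by positivity
    have hderiv : ∀ x ∈ Set.uIcc (0:ℝ) 1,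
        HasDerivAt (fun u => (1 - u) * sin (c * u) / c - cos (c * u) / c ^ 2)
          ((1 - x) * cos (c * x)) x := by
      intro x _
      have hlin : HasDerivAt (fun u => c * u) c x := by
        simpa using (hasDerivAt_id x).const_mul c
      have := ((((hasDerivAt_id x).const_sub 1).mul ((hasDerivAt_sin _).comp x hlin)).div_const c).sub
        (((hasDerivAt_cos _).comp x hlin).div_const (c ^ 2))
      refine this.congr_deriv ?_
      simp only [Function.comp_apply, id]
      field_simp
      ring
    rw [integral_eq_sub_of_hasDerivAt hderiv (by apply Continuous.intervalIntegrable; fun_prop),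
      w, if_neg hξ, div_pow, show π * ξ = c / 2 by rw [hc]; ring, sin_sq_eq_half_sub,
      show 2 * (c / 2) = c by ring]
    field_simp
    simp only [sub_self, zero_mul, zero_sub, sub_zero, mul_one, mul_zero, sin_zero, cos_zero,
      sub_neg_eq_add]
    ring

theorem integral_fejer_mul_cos_sub (ξ φ : ℝ) :
    ∫ u in (-1:ℝ)..1, (1 - |u|) * cos (2 * π * ξ * u - φ) = cos φ * w ξ := by
  rw [integral_neg_to_self_eq_integral_add_comp_neg (by fun_prop)]
  have hsymm : ∀ u ∈ Set.uIcc (0:ℝ) 1,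
      (1 - |u|) * cos (2 * π * ξ * u - φ) + (1 - |-u|) * cos (2 * π * ξ * -u - φ)
        = 2 * cos φ * ((1 - u) * cos (2 * π * ξ * u)) := by
    intro u hu
    rw [Set.uIcc_of_le zero_le_one] at hu
    rw [abs_neg, abs_of_nonneg hu.1,
      show 2 * π * ξ * -u - φ = -(2 * π * ξ * u + φ) by ring, cos_neg, cos_add, cos_sub]
    ring
  rw [integral_congr hsymm, integral_const_mul, integral_one_sub_mul_cos]
  ring

theorem integral_fejer_mul_one_add_cos_mul_cos_sub (ξ τ φ : ℝ) :
    ∫ u in (-1:ℝ)..1, (1 - |u|) * (1 + τ * cos (2 * π * ξ * u)) * cos (2 * π * ξ * u - φ)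
      = cos φ * (w ξ + τ / 2 * (w (2 * ξ) + 1)) := by
  have hprod : ∀ u : ℝ, (1 - |u|) * (1 + τ * cos (2 * π * ξ * u)) * cos (2 * π * ξ * u - φ)
      = (1 - |u|) * cos (2 * π * ξ * u - φ)
        + τ / 2 * ((1 - |u|) * cos (2 * π * (2 * ξ) * u - φ))
        + τ / 2 * ((1 - |u|) * cos (2 * π * 0 * u - φ)) := by
    intro u
    rw [show 2 * π * (2 * ξ) * u - φ = 2 * (2 * π * ξ * u) - φ by ring,
      show 2 * π * 0 * u - φ = -φ by ring, cos_neg, cos_sub, cos_sub, cos_two_mul, sin_two_mul]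
    ring
  have hint : ∀ ξ : ℝ, IntervalIntegrable (fun u => (1 - |u|) * cos (2 * π * ξ * u - φ))
      MeasureTheory.volume (-1) 1 :=
    fun ξ => Continuous.intervalIntegrable (by fun_prop) _ _
  simp_rw [hprod]
  rw [integral_add ((hint ξ).add ((hint (2 * ξ)).const_mul _)) ((hint 0).const_mul _),
    integral_add (hint ξ) ((hint (2 * ξ)).const_mul _), integral_const_mul, integral_const_mul,
    integral_fejer_mul_cos_sub, integral_fejer_mul_cos_sub, integral_fejer_mul_cos_sub, w_zero]
  ring

theorem abs_integral_fejer_mul_one_add_cos_mul_cos_sub_sub_le (ξ φ : ℝ) {τ : ℝ} (hτ : |τ| ≤ 1) :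
    |(∫ u in (-1:ℝ)..1, (1 - |u|) * (1 + τ * cos (2 * π * ξ * u)) * cos (2 * π * ξ * u - φ))
        - τ / 2 * cos φ| ≤ w ξ + 1 / 2 * w (2 * ξ) := by
  rw [integral_fejer_mul_one_add_cos_mul_cos_sub,
    show cos φ * (w ξ + τ / 2 * (w (2 * ξ) + 1)) - τ / 2 * cos φ
      = cos φ * (w ξ + τ / 2 * w (2 * ξ)) by ring]
  calc |cos φ * (w ξ + τ / 2 * w (2 * ξ))|
      ≤ |w ξ + τ / 2 * w (2 * ξ)| := by
        rw [abs_mul]; exact mul_le_of_le_one_left (abs_nonneg _) (abs_cos_le_one _)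
    _ ≤ |w ξ| + |τ / 2 * w (2 * ξ)| := abs_add_le _ _
    _ ≤ w ξ + 1 / 2 * w (2 * ξ) := by
        rw [abs_mul, abs_div, abs_two, abs_of_nonneg (w_nonneg _), abs_of_nonneg (w_nonneg _)]
        gcongr
        exact w_nonneg _

theorem w_two_mul_add_half_w_four_mul_le {α : ℝ} (hα : α ≠ 0) :
    w (2 * α) + 1 / 2 * w (4 * α) ≤ 3 / (2 * π ^ 2 * α ^ 2) :=
  calc w (2 * α) + 1 / 2 * w (4 * α)
      ≤ 1 / (π * (2 * α)) ^ 2 + 1 / 2 * (1 / (π * (4 * α)) ^ 2) := by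
        gcongr
        · exact w_le_inv_sq (by positivity)
        · exact w_le_inv_sq (by positivity)
    _ = 9 / 32 * (1 / (π ^ 2 * α ^ 2)) := by ring
    _ ≤ 3 / 2 * (1 / (π ^ 2 * α ^ 2)) := mul_le_mul_of_nonneg_right (by norm_num) (by positivity)
    _ = 3 / (2 * π ^ 2 * α ^ 2) := by ring

theorem cos_four_pi_mul_nat_add (t : ℕ) (x : ℝ) : cos (4 * π * t + x) = cos x := by
  rw [← cos_add_nat_mul_two_pi x (2 * t)]
  congr 1
  push_cast
  ring

theorem r_one_estimate_general (τ α : ℝ) (hτ : τ = 1 ∨ τ = -1) (hα : 1 ≤ α)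
    (t : ℕ) :
    |(∫ u in (-1:ℝ)..1, (1 - |u|) * (1 + τ * Real.cos (4 * Real.pi * α * u)) *
          Real.cos (4 * Real.pi * ((t : ℝ) + α * u) - Real.pi / 4))
        - τ / 2 * Real.cos (4 * Real.pi * (t : ℝ) - Real.pi / 4)|
      ≤ w (2 * α) + (1 / 2) * w (4 * α) ∧
    w (2 * α) + (1 / 2) * w (4 * α) ≤ 3 / (2 * Real.pi ^ 2 * α ^ 2) ∧
    Real.cos (4 * Real.pi * (t : ℝ) - Real.pi / 4) = 1 / Real.sqrt 2 := by
  have hcos : cos (4 * π * t - π / 4) = cos (π / 4) := by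
    rw [sub_eq_add_neg, cos_four_pi_mul_nat_add, cos_neg]
  have hintegrand : ∀ u : ℝ, (1 - |u|) * (1 + τ * cos (4 * π * α * u)) *
      cos (4 * π * (t + α * u) - π / 4) = (1 - |u|) * (1 + τ * cos (2 * π * (2 * α) * u)) *
      cos (2 * π * (2 * α) * u - π / 4) := by
    intro u
    rw [show 4 * π * (t + α * u) - π / 4 = 4 * π * t + (2 * π * (2 * α) * u - π / 4) by ring,
      cos_four_pi_mul_nat_add]
    ring_nf
  have hτ1 : |τ| ≤ 1 := by rcases hτ with rfl | rfl <;> simp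
  refine ⟨?_, w_two_mul_add_half_w_four_mul_le (by positivity), ?_⟩
  · simp_rw [hintegrand, hcos, show 4 * α = 2 * (2 * α) by ring]
    exact abs_integral_fejer_mul_one_add_cos_mul_cos_sub_sub_le (2 * α) (π / 4) hτ1
  · rw [hcos, cos_pi_div_four, sqrt_div_self']

theorem r_one_estimate (τ α : ℝ) (hτ : τ = 1 ∨ τ = -1) (hα : 1 ≤ α)
    (t : ℕ) (ht : 0 < t) :
    |(∫ u in (-1:ℝ)..1, (1 - |u|) * (1 + τ * Real.cos (4 * Real.pi * α * u)) *
          Real.cos (4 * Real.pi * ((t : ℝ) + α * u) - Real.pi / 4))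
        - τ / 2 * Real.cos (4 * Real.pi * (t : ℝ) - Real.pi / 4)|
      ≤ w (2 * α) + (1 / 2) * w (4 * α) ∧
    w (2 * α) + (1 / 2) * w (4 * α) ≤ 3 / (2 * Real.pi ^ 2 * α ^ 2) ∧
    Real.cos (4 * Real.pi * (t : ℝ) - Real.pi / 4) = 1 / Real.sqrt 2 :=
  r_one_estimate_general τ α hτ hα t
end

section
/- For any α ≥ 2 and any squarefree positive integer d ≥ 1, ∑_{n ≥ 1, n ≠ d} (d(n)/n^{3/4}) · min(1, d/(α² (√n − √d)²)) ≪ α^{−1/3} d^{1/4} log(2d), where d(n) is the divisor function and the implied constant is absolute. -/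
/-!
Write the summand as `d(n) g(n)` with `g(n) = n^(-3/4) min(1, d / (α² (√n - √d)²))`. Since
`(n - d)² ≤ 2 (n + d) (√n - √d)²`, the weight satisfies `g(n) ≪ α⁻² n^(-3/4)` for `n ≤ d/2`,
`g(n) ≪ d α⁻² n^(-7/4)` for `n > 2d` and `g(n) ≪ d^(-3/4) min(1, c² / (n - d)²)` with `c = 3d/α`
in between.

Instead of a short-interval divisor bound, every divisor sum is opened over factorisations `n = ab`
with `a ≤ b`, using `d(n) ≤ 2 #{a ∣ n : a² ≤ n}`. In the two outer ranges this leaves a `p`-series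
in `b` followed by a harmonic sum in `a`, which produces `log d`. In the middle range `a ≤ √(2d)`,
and for fixed `a` the numbers `ab - d` form an arithmetic progression of difference `a` avoiding
`0`, so the sum over `b` is `≪ min(1, c²) + c / a`. The resulting term `d^(-1/4) min(1, c²)` is
the only one that is not `≪ α⁻¹ d^(1/4) log d`; the interpolation `min(1, x) ≤ x^(1/6)` turns it
into `≪ α^(-1/3) d^(1/4)`.
-/

open Finset Real

theorem log_natCast_le_log_natCast {m n : ℕ} (h : m ≤ n) : log m ≤ log n := by
  rcases m.eq_zero_or_pos with rfl | hm
  · simpa using log_natCast_nonneg n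
  · exact log_le_log (by exact_mod_cast hm) (by exact_mod_cast h)

theorem min_one_le_rpow {x r : ℝ} (hx : 0 ≤ x) (hr0 : 0 ≤ r) (hr1 : r ≤ 1) : min 1 x ≤ x ^ r := by
  rcases le_total x 1 with h | h
  · exact (min_le_right _ _).trans (by simpa using rpow_le_rpow_of_exponent_ge' hx h hr0 hr1)
  · exact (min_le_left _ _).trans (one_le_rpow h hr0)

theorem sum_Icc_inv_le_one_add_log (n : ℕ) : ∑ i ∈ Icc 1 n, (i : ℝ)⁻¹ ≤ 1 + log n := by
  simpa [harmonic_eq_sum_Icc] using harmonic_le_one_add_log n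

theorem sum_Ioc_rpow_neg_le_integral {s : ℝ} (hs : 0 ≤ s) {m K : ℕ} (hm : 0 < m) (hmK : m ≤ K) :
    ∑ b ∈ Ioc m K, (b : ℝ) ^ (-s) ≤ ∫ x in (m : ℝ)..K, x ^ (-s) := by
  have hanti : AntitoneOn (fun x : ℝ => x ^ (-s)) (Set.Icc (m : ℝ) K) := fun x hx y _ hxy =>
    rpow_le_rpow_of_nonpos (lt_of_lt_of_le (by exact_mod_cast hm) hx.1) hxy (by linarith)
  convert hanti.sum_le_integral_Ico hmK using 1
  rw [sum_Ico_add' (fun i : ℕ => (i : ℝ) ^ (-s)) m K 1]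
  congr 1
  ext; simp

theorem sum_Icc_rpow_neg_le {s : ℝ} (hs0 : 0 ≤ s) (hs1 : s < 1) (K : ℕ) :
    ∑ b ∈ Icc 1 K, (b : ℝ) ^ (-s) ≤ (K : ℝ) ^ (1 - s) / (1 - s) := by
  rcases K.eq_zero_or_pos with rfl | hK
  · simp [zero_rpow (by linarith : 1 - s ≠ 0)]
  rw [← sum_Ioc_add_eq_sum_Icc hK]
  have hint := sum_Ioc_rpow_neg_le_integral hs0 one_pos hK
  rw [integral_rpow (Or.inl (by linarith)), Nat.cast_one, one_rpow,
    show -s + 1 = 1 - s by ring] at hint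
  have h1 : (1 : ℝ) ≤ 1 / (1 - s) := by rw [le_div_iff₀ (by linarith)]; linarith
  calc _ ≤ ((K : ℝ) ^ (1 - s) - 1) / (1 - s) + 1 := by simpa using hint
    _ ≤ _ := by rw [sub_div]; linarith

theorem sum_Icc_rpow_neg_le_of_one_lt {s : ℝ} (hs : 1 < s) {m : ℕ} (hm : 0 < m) (N : ℕ) :
    ∑ b ∈ Icc m N, (b : ℝ) ^ (-s) ≤ s / (s - 1) * (m : ℝ) ^ (1 - s) := by
  have hm1 : (1 : ℝ) ≤ m := by exact_mod_cast hm
  have hs1 : 0 < s - 1 := by linarith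
  rcases lt_or_ge N m with hNm | hmN
  · simpa [Icc_eq_empty_of_lt hNm] using by positivity
  rw [← sum_Ioc_add_eq_sum_Icc hmN]
  have hint := sum_Ioc_rpow_neg_le_integral (by linarith) hm hmN
  have htail : ∫ x in (m : ℝ)..N, x ^ (-s) ≤ (m : ℝ) ^ (1 - s) / (s - 1) := by
    rw [integral_rpow (Or.inr ⟨by linarith, fun h => by
      rw [Set.uIcc_of_le (by exact_mod_cast hmN)] at h; linarith [h.1]⟩),
      show -s + 1 = -(s - 1) by ring, show 1 - s = -(s - 1) by ring, div_neg, ← neg_div, neg_sub,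
      div_le_div_iff_of_pos_right hs1]
    linarith [rpow_nonneg (Nat.cast_nonneg N) (-(s - 1))]
  have hfirst : (m : ℝ) ^ (-s) ≤ (m : ℝ) ^ (1 - s) :=
    rpow_le_rpow_of_exponent_le hm1 (by linarith)
  have : s / (s - 1) * (m : ℝ) ^ (1 - s) = (m : ℝ) ^ (1 - s) / (s - 1) + (m : ℝ) ^ (1 - s) := by
    field_simp; ring
  linarith

theorem sum_Icc_min_one_div_sq_le {C : ℝ} (hC : 0 ≤ C) (K : ℕ) :
    ∑ k ∈ Icc 1 K, min 1 (C ^ 2 / (k : ℝ) ^ 2) ≤ 3 * C := by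
  set m := ⌊C⌋₊
  have hm1 : C < m + 1 := Nat.lt_floor_add_one C
  rw [← sum_filter_add_sum_filter_not _ (· ≤ m)]
  have hsmall : ∑ k ∈ Icc 1 K with k ≤ m, min 1 (C ^ 2 / (k : ℝ) ^ 2) ≤ C :=
    calc _ ≤ ∑ k ∈ Icc 1 K with k ≤ m, (1 : ℝ) := sum_le_sum fun _ _ => min_le_left _ _
      _ ≤ #(Icc 1 m) := by
          rw [sum_const, nsmul_one]
          exact_mod_cast card_le_card fun k hk => by
            simp only [mem_filter, mem_Icc] at hk ⊢; omega
      _ ≤ C := by simpa using Nat.floor_le hC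
  have hlarge : ∑ k ∈ Icc 1 K with ¬k ≤ m, min 1 (C ^ 2 / (k : ℝ) ^ 2) ≤ 2 * C :=
    calc _ ≤ ∑ k ∈ Icc 1 K with ¬k ≤ m, C ^ 2 * ((k : ℝ) ^ 2)⁻¹ :=
          sum_le_sum fun _ _ => (min_le_right _ _).trans_eq (div_eq_mul_inv _ _)
      _ ≤ ∑ k ∈ Ioo m (K + 1), C ^ 2 * ((k : ℝ) ^ 2)⁻¹ :=
          sum_le_sum_of_subset_of_nonneg
            (fun k hk => by simp only [mem_filter, mem_Icc, mem_Ioo] at hk ⊢; omega)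
            (fun _ _ _ => by positivity)
      _ ≤ C ^ 2 * (2 / (m + 1)) := by
          rw [← mul_sum]; gcongr; exact sum_Ioo_inv_sq_le m (K + 1)
      _ ≤ 2 * C := by
          rw [mul_div_assoc', div_le_iff₀ (by positivity)]
          nlinarith
  linarith

theorem sum_min_one_div_sq_le_of_injOn {ι : Type*} {S : Finset ι} {x : ι → ℝ} {κ : ι → ℕ}
    {a : ℕ} (ha : 0 < a) (hκ : Set.InjOn κ S) (hx : ∀ i ∈ S, max 1 (a * κ i : ℝ) ≤ |x i|)
    {c : ℝ} (hc : 0 ≤ c) :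
    ∑ i ∈ S, min 1 (c ^ 2 / x i ^ 2) ≤ min 1 (c ^ 2) + 3 * (c / a) := by
  set ψ : ℕ → ℝ := fun k => min 1 (c ^ 2 / max 1 (a * k : ℝ) ^ 2)
  set K := (S.image κ).sup id
  have ha1 : (1 : ℝ) ≤ a := by exact_mod_cast ha
  calc ∑ i ∈ S, min 1 (c ^ 2 / x i ^ 2)
      ≤ ∑ i ∈ S, ψ (κ i) := by
        refine sum_le_sum fun i hi => min_le_min_left _ ?_
        have h1 : (0 : ℝ) < max 1 (a * κ i : ℝ) := lt_max_of_lt_left one_pos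
        refine div_le_div_of_nonneg_left (sq_nonneg c) (by positivity) ?_
        rw [← sq_abs (x i)]
        exact pow_le_pow_left₀ h1.le (hx i hi) 2
    _ = ∑ k ∈ S.image κ, ψ k := (sum_image hκ).symm
    _ ≤ ∑ k ∈ range (K + 1), ψ k :=
        sum_le_sum_of_subset_of_nonneg
          (fun k hk => mem_range.mpr (Nat.lt_succ_of_le (le_sup (f := id) hk)))
          (fun _ _ _ => by positivity)
    _ = ψ 0 + ∑ k ∈ Icc 1 K, min 1 ((c / a) ^ 2 / (k : ℝ) ^ 2) := by
        rw [range_eq_Ico, sum_eq_sum_Ico_succ_bot (Nat.succ_pos K)]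
        congr 1
        refine sum_congr rfl fun k hk => ?_
        have hk1 : (1 : ℝ) ≤ k := by exact_mod_cast (mem_Icc.mp hk).1
        simp only [ψ, max_eq_right (one_le_mul_of_one_le_of_one_le ha1 hk1)]
        rw [div_pow, mul_pow, div_div]
    _ ≤ min 1 (c ^ 2) + 3 * (c / a) := by
        gcongr
        · simp [ψ]
        · exact sum_Icc_min_one_div_sq_le (by positivity) K

theorem sum_min_one_div_sq_mul_sub_le_of_lt {a : ℕ} (ha : 0 < a) (d : ℕ) (T : Finset ℕ) {c : ℝ}
    (hc : 0 ≤ c) :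
    ∑ b ∈ T with a * b < d, min 1 (c ^ 2 / ((a * b : ℕ) - d : ℝ) ^ 2) ≤
      min 1 (c ^ 2) + 3 * (c / a) := by
  have hbelow : ∀ b, a * b < d → b ≤ d / a := fun b h =>
    (Nat.le_div_iff_mul_le ha).mpr (by rw [mul_comm]; exact h.le)
  refine sum_min_one_div_sq_le_of_injOn (κ := fun b => d / a - b) ha ?_ (fun b hb => ?_) hc
  · intro b hb b' hb' h
    simp only [coe_filter, Set.mem_ofPred_eq] at hb hb'
    have := hbelow b hb.2; have := hbelow b' hb'.2
    simp only at h; omega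
  · obtain ⟨k, hk⟩ : ∃ k, d / a = b + k :=
      ⟨d / a - b, by have := hbelow b (mem_filter.mp hb).2; omega⟩
    have h1 : ((a * b + 1 : ℕ) : ℝ) ≤ d := by exact_mod_cast (mem_filter.mp hb).2
    have h2 : ((a * b + a * k : ℕ) : ℝ) ≤ d := by
      exact_mod_cast (show a * b + a * k ≤ d by rw [← Nat.mul_add, ← hk]; exact Nat.mul_div_le d a)
    push_cast at h1 h2 ⊢
    rw [show d / a - b = k by omega, abs_sub_comm, abs_of_pos (by linarith)]
    exact max_le (by linarith) (by linarith)

theorem sum_min_one_div_sq_mul_sub_le_of_gt {a : ℕ} (ha : 0 < a) (d : ℕ) (T : Finset ℕ) {c : ℝ}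
    (hc : 0 ≤ c) :
    ∑ b ∈ T with d < a * b, min 1 (c ^ 2 / ((a * b : ℕ) - d : ℝ) ^ 2) ≤
      min 1 (c ^ 2) + 3 * (c / a) := by
  have hq : d < a * (d / a + 1) := Nat.lt_mul_div_succ d ha
  have habove : ∀ b, d < a * b → d / a < b := fun b h => by
    by_contra! hb; have := Nat.mul_le_mul_left a hb; have := Nat.mul_div_le d a; omega
  refine sum_min_one_div_sq_le_of_injOn (κ := fun b => b - d / a - 1) ha ?_ (fun b hb => ?_) hc
  · intro b hb b' hb' h
    simp only [coe_filter, Set.mem_ofPred_eq] at hb hb'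
    have := habove b hb.2; have := habove b' hb'.2
    simp only at h; omega
  · obtain ⟨k, rfl⟩ : ∃ k, b = d / a + 1 + k :=
      ⟨b - d / a - 1, by have := habove b (mem_filter.mp hb).2; omega⟩
    have h1 : ((d + 1 + a * k : ℕ) : ℝ) ≤ (a * (d / a + 1 + k) : ℕ) := by
      exact_mod_cast (show d + 1 + a * k ≤ a * (d / a + 1 + k) by rw [Nat.mul_add]; omega)
    have hak : (0 : ℝ) ≤ a * k := by positivity
    push_cast at h1 ⊢
    rw [show d / a + 1 + k - d / a - 1 = k by omega, abs_of_pos (by linarith)]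
    exact max_le (by linarith) (by linarith)

theorem sum_min_one_div_sq_mul_sub_le {a : ℕ} (ha : 0 < a) (d : ℕ) (T : Finset ℕ) {c : ℝ}
    (hc : 0 ≤ c) :
    ∑ b ∈ T with a * b ≠ d, min 1 (c ^ 2 / ((a * b : ℕ) - d : ℝ) ^ 2) ≤
      2 * min 1 (c ^ 2) + 6 * (c / a) := by
  have hsplit : ∑ b ∈ T with a * b ≠ d, min 1 (c ^ 2 / ((a * b : ℕ) - d : ℝ) ^ 2) =
      ∑ b ∈ T with a * b < d, min 1 (c ^ 2 / ((a * b : ℕ) - d : ℝ) ^ 2) +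
      ∑ b ∈ T with d < a * b, min 1 (c ^ 2 / ((a * b : ℕ) - d : ℝ) ^ 2) := by
    rw [← sum_filter_add_sum_filter_not _ (fun b => a * b < d), filter_filter, filter_filter]
    congr 2 <;> exact filter_congr fun b _ => by omega
  linarith [sum_min_one_div_sq_mul_sub_le_of_lt ha d T hc,
    sum_min_one_div_sq_mul_sub_le_of_gt ha d T hc]

theorem card_divisors_le_two_mul_card_filter (n : ℕ) :
    #n.divisors ≤ 2 * #{a ∈ n.divisors | a * a ≤ n} := by
  have hsmall : #{a ∈ n.divisors | ¬a * a ≤ n} ≤ #{a ∈ n.divisors | a * a ≤ n} := by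
    apply card_le_card_of_injOn (n / ·)
    · intro a ha
      simp only [coe_filter, Set.mem_ofPred_eq, Nat.mem_divisors, not_le] at ha ⊢
      obtain ⟨⟨hdvd, hn⟩, hlt⟩ := ha
      refine ⟨⟨Nat.div_dvd_of_dvd hdvd, hn⟩, ?_⟩
      have hq : n / a * a = n := Nat.div_mul_cancel hdvd
      have hqa : n / a ≤ a := by nlinarith
      calc n / a * (n / a) ≤ n / a * a := Nat.mul_le_mul_left _ hqa
        _ = n := hq
    · intro a ha b hb hab
      simp only [coe_filter, Set.mem_ofPred_eq, Nat.mem_divisors] at ha hb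
      rw [← Nat.div_div_self ha.1.1 ha.1.2, ← Nat.div_div_self hb.1.1 hb.1.2]
      exact congrArg (n / ·) hab
  have := card_filter_add_card_filter_not (s := n.divisors) (fun a => a * a ≤ n)
  omega

theorem sum_sum_small_divisors_eq {M : Type*} [AddCommMonoid M] {s : Finset ℕ} {N : ℕ}
    (hs : s ⊆ Icc 1 N) (f : ℕ → M) :
    ∑ n ∈ s, ∑ a ∈ n.divisors with a * a ≤ n, f n =
      ∑ a ∈ Icc 1 N, ∑ b ∈ Icc a N with a * b ∈ s, f (a * b) := by
  calc ∑ n ∈ s, ∑ a ∈ n.divisors with a * a ≤ n, f n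
      = ∑ a ∈ Icc 1 N, ∑ n ∈ s with a ∣ n ∧ a * a ≤ n, f n := by
        apply sum_comm'
        intro n a
        simp only [mem_filter, Nat.mem_divisors, mem_Icc]
        constructor
        · rintro ⟨hn, ⟨hdvd, hn0⟩, hsq⟩
          exact ⟨⟨hn, hdvd, hsq⟩, Nat.pos_of_dvd_of_pos hdvd (by omega),
            (Nat.le_of_dvd (by omega) hdvd).trans (mem_Icc.mp (hs hn)).2⟩
        · rintro ⟨⟨hn, hdvd, hsq⟩, -⟩
          exact ⟨hn, ⟨hdvd, by have := (mem_Icc.mp (hs hn)).1; omega⟩, hsq⟩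
    _ = ∑ a ∈ Icc 1 N, ∑ b ∈ Icc a N with a * b ∈ s, f (a * b) := by
        refine sum_congr rfl fun a ha => ?_
        have ha0 : 0 < a := (mem_Icc.mp ha).1
        apply sum_nbij' (· / a) (a * ·)
        · intro n hn
          simp only [mem_filter, mem_Icc] at hn ⊢
          obtain ⟨hn, hdvd, hsq⟩ := hn
          have hq : a * (n / a) = n := Nat.mul_div_cancel' hdvd
          refine ⟨⟨?_, (Nat.div_le_self n a).trans (mem_Icc.mp (hs hn)).2⟩, by rwa [hq]⟩
          exact Nat.le_of_mul_le_mul_left (hq.symm ▸ hsq : a * a ≤ a * (n / a)) ha0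
        · intro b hb
          simp only [mem_filter, mem_Icc] at hb ⊢
          exact ⟨hb.2, dvd_mul_right a b, Nat.mul_le_mul_left a hb.1.1⟩
        · intro n hn
          exact Nat.mul_div_cancel' (mem_filter.mp hn).2.1
        · intro b _
          exact Nat.mul_div_cancel_left b ha0
        · intro n hn
          rw [Nat.mul_div_cancel' (mem_filter.mp hn).2.1]

theorem sum_card_divisors_mul_le {s : Finset ℕ} {N : ℕ} (hs : s ⊆ Icc 1 N) {f : ℕ → ℝ}
    (hf : ∀ n ∈ s, 0 ≤ f n) :
    ∑ n ∈ s, (#n.divisors : ℝ) * f n ≤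
      2 * ∑ a ∈ Icc 1 N, ∑ b ∈ Icc a N with a * b ∈ s, f (a * b) := by
  calc ∑ n ∈ s, (#n.divisors : ℝ) * f n
      ≤ ∑ n ∈ s, 2 * (#{a ∈ n.divisors | a * a ≤ n} : ℝ) * f n := by
        gcongr with n hn
        · exact hf n hn
        · exact_mod_cast card_divisors_le_two_mul_card_filter n
    _ = 2 * ∑ n ∈ s, ∑ a ∈ n.divisors with a * a ≤ n, f n := by
        simp only [mul_sum, sum_const, nsmul_eq_mul, mul_assoc]
    _ = _ := by rw [sum_sum_small_divisors_eq hs]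

theorem sum_card_divisors_mul_rpow_neg_le {s : ℝ} (hs0 : 0 ≤ s) (hs1 : s < 1) (M : ℕ) :
    ∑ n ∈ Icc 1 M, (#n.divisors : ℝ) * (n : ℝ) ^ (-s) ≤
      2 / (1 - s) * (M : ℝ) ^ (1 - s) * (1 + log M) := by
  have hs : 0 < 1 - s := by linarith
  have hrow : ∀ a ∈ Icc 1 M, ∑ b ∈ Icc a M with a * b ∈ Icc 1 M, ((a * b : ℕ) : ℝ) ^ (-s) ≤
      (M : ℝ) ^ (1 - s) / (1 - s) * (a : ℝ)⁻¹ := by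
    intro a ha
    have ha1 := (mem_Icc.mp ha).1
    have ha0 : (0 : ℝ) < a := by exact_mod_cast ha1
    calc ∑ b ∈ Icc a M with a * b ∈ Icc 1 M, ((a * b : ℕ) : ℝ) ^ (-s)
        = ∑ b ∈ Icc a M with a * b ∈ Icc 1 M, (a : ℝ) ^ (-s) * (b : ℝ) ^ (-s) :=
          sum_congr rfl fun b _ => by push_cast; exact mul_rpow ha0.le (Nat.cast_nonneg b)
      _ ≤ ∑ b ∈ Icc 1 (M / a), (a : ℝ) ^ (-s) * (b : ℝ) ^ (-s) := by
          refine sum_le_sum_of_subset_of_nonneg (fun b hb => ?_) (fun _ _ _ => by positivity)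
          simp only [mem_filter, mem_Icc] at hb ⊢
          exact ⟨by omega, (Nat.le_div_iff_mul_le (by omega)).mpr (by linarith [hb.2.2])⟩
      _ = (a : ℝ) ^ (-s) * ∑ b ∈ Icc 1 (M / a), (b : ℝ) ^ (-s) := by rw [mul_sum]
      _ ≤ (a : ℝ) ^ (-s) * (((M : ℝ) / a) ^ (1 - s) / (1 - s)) := by
          gcongr
          refine (sum_Icc_rpow_neg_le hs0 hs1 _).trans ?_
          gcongr
          exact Nat.cast_div_le
      _ = (M : ℝ) ^ (1 - s) / (1 - s) * (a : ℝ)⁻¹ := by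
          rw [div_rpow (by positivity) ha0.le, rpow_sub ha0, rpow_one, rpow_neg ha0.le]
          field_simp
  calc ∑ n ∈ Icc 1 M, (#n.divisors : ℝ) * (n : ℝ) ^ (-s)
      ≤ 2 * ∑ a ∈ Icc 1 M, ∑ b ∈ Icc a M with a * b ∈ Icc 1 M, ((a * b : ℕ) : ℝ) ^ (-s) :=
        sum_card_divisors_mul_le subset_rfl fun _ _ => by positivity
    _ ≤ 2 * ∑ a ∈ Icc 1 M, (M : ℝ) ^ (1 - s) / (1 - s) * (a : ℝ)⁻¹ := by
        gcongr with a ha; exact hrow a ha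
    _ = 2 / (1 - s) * (M : ℝ) ^ (1 - s) * ∑ a ∈ Icc 1 M, (a : ℝ)⁻¹ := by
        rw [← mul_sum]; ring
    _ ≤ 2 / (1 - s) * (M : ℝ) ^ (1 - s) * (1 + log M) := by
        gcongr; exact sum_Icc_inv_le_one_add_log M

-- `M / a + 1` is the least `b` with `M < a * b`.
theorem sum_Icc_filter_lt_mul_rpow_neg_le {s : ℝ} (hs : 1 < s) {a : ℕ} (ha : 0 < a) (M N : ℕ) :
    ∑ b ∈ Icc 1 N with M < a * b, ((a * b : ℕ) : ℝ) ^ (-s) ≤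
      s / (s - 1) * ((a : ℝ) ^ (-s) * ((M / a + 1 : ℕ) : ℝ) ^ (1 - s)) := by
  have ha0 : (0 : ℝ) < a := by exact_mod_cast ha
  calc ∑ b ∈ Icc 1 N with M < a * b, ((a * b : ℕ) : ℝ) ^ (-s)
      = ∑ b ∈ Icc 1 N with M < a * b, (a : ℝ) ^ (-s) * (b : ℝ) ^ (-s) :=
        sum_congr rfl fun b _ => by push_cast; exact mul_rpow ha0.le (Nat.cast_nonneg b)
    _ ≤ ∑ b ∈ Icc (M / a + 1) N, (a : ℝ) ^ (-s) * (b : ℝ) ^ (-s) := by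
        refine sum_le_sum_of_subset_of_nonneg (fun b hb => ?_) (fun _ _ _ => by positivity)
        simp only [mem_filter, mem_Icc] at hb ⊢
        exact ⟨Nat.succ_le_of_lt ((Nat.div_lt_iff_lt_mul ha).mpr (by linarith [hb.2])), hb.1.2⟩
    _ ≤ (a : ℝ) ^ (-s) * (s / (s - 1) * ((M / a + 1 : ℕ) : ℝ) ^ (1 - s)) := by
        rw [← mul_sum]
        gcongr
        exact sum_Icc_rpow_neg_le_of_one_lt hs (Nat.succ_pos _) N
    _ = _ := by ring

theorem rpow_neg_mul_rpow_div_add_one_le {s : ℝ} (hs : 1 < s) {a : ℕ} (ha : 0 < a) (M : ℕ) :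
    (a : ℝ) ^ (-s) * ((M / a + 1 : ℕ) : ℝ) ^ (1 - s) ≤
      if a ≤ M then (M : ℝ) ^ (1 - s) * (a : ℝ)⁻¹ else (a : ℝ) ^ (-s) := by
  have ha0 : (0 : ℝ) < a := by exact_mod_cast ha
  split_ifs with haM
  · have hlt : (M : ℝ) / a < ((M / a + 1 : ℕ) : ℝ) := by
      rw [div_lt_iff₀ ha0, mul_comm]
      exact_mod_cast Nat.lt_mul_div_succ M ha
    calc (a : ℝ) ^ (-s) * ((M / a + 1 : ℕ) : ℝ) ^ (1 - s)
        ≤ (a : ℝ) ^ (-s) * ((M : ℝ) / a) ^ (1 - s) :=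
          mul_le_mul_of_nonneg_left
            (rpow_le_rpow_of_nonpos (div_pos (by exact_mod_cast (by omega : 0 < M)) ha0) hlt.le
              (by linarith)) (by positivity)
      _ = (M : ℝ) ^ (1 - s) * (a : ℝ)⁻¹ := by
          rw [div_rpow (Nat.cast_nonneg M) ha0.le, mul_div_left_comm, ← rpow_sub ha0,
            show -s - (1 - s) = -1 by ring, rpow_neg_one]
  · rw [Nat.div_eq_of_lt (by omega), zero_add, Nat.cast_one, one_rpow, mul_one]

theorem sum_Ioc_card_divisors_mul_rpow_neg_le {s : ℝ} (hs : 1 < s) {M : ℕ} (hM : 0 < M) (N : ℕ) :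
    ∑ n ∈ Ioc M N, (#n.divisors : ℝ) * (n : ℝ) ^ (-s) ≤
      2 * (s / (s - 1)) * (M : ℝ) ^ (1 - s) * (1 + log M + s / (s - 1)) := by
  have hM0 : (0 : ℝ) < M := by exact_mod_cast hM
  set C := s / (s - 1)
  have hC : 0 ≤ C := div_nonneg (by linarith) (by linarith)
  calc ∑ n ∈ Ioc M N, (#n.divisors : ℝ) * (n : ℝ) ^ (-s)
      ≤ 2 * ∑ a ∈ Icc 1 N, ∑ b ∈ Icc a N with a * b ∈ Ioc M N, ((a * b : ℕ) : ℝ) ^ (-s) :=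
        sum_card_divisors_mul_le (fun n hn => by simp only [mem_Ioc, mem_Icc] at hn ⊢; omega)
          fun _ _ => by positivity
    _ ≤ 2 * ∑ a ∈ Icc 1 N,
          C * (if a ≤ M then (M : ℝ) ^ (1 - s) * (a : ℝ)⁻¹ else (a : ℝ) ^ (-s)) := by
        gcongr with a ha
        have ha1 := (mem_Icc.mp ha).1
        refine le_trans ?_ ((sum_Icc_filter_lt_mul_rpow_neg_le hs ha1 M N).trans
          (mul_le_mul_of_nonneg_left (rpow_neg_mul_rpow_div_add_one_le hs ha1 M) hC))
        refine sum_le_sum_of_subset_of_nonneg (fun b hb => ?_) fun _ _ _ => by positivity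
        simp only [mem_filter, mem_Icc, mem_Ioc] at hb ⊢
        exact ⟨⟨by omega, hb.1.2⟩, hb.2.1⟩
    _ = 2 * C * (∑ a ∈ Icc 1 N with a ≤ M, (M : ℝ) ^ (1 - s) * (a : ℝ)⁻¹ +
          ∑ a ∈ Icc 1 N with ¬a ≤ M, (a : ℝ) ^ (-s)) := by
        rw [← mul_sum, sum_ite, mul_assoc]
    _ ≤ 2 * C * ((M : ℝ) ^ (1 - s) * (1 + log M) + C * (M : ℝ) ^ (1 - s)) := by
        gcongr
        · rw [← mul_sum]
          gcongr
          refine le_trans ?_ (sum_Icc_inv_le_one_add_log M)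
          exact sum_le_sum_of_subset_of_nonneg
            (fun a ha => by simp only [mem_filter, mem_Icc] at ha ⊢; omega)
            fun _ _ _ => by positivity
        · refine le_trans (sum_le_sum_of_subset_of_nonneg (t := Icc (M + 1) N)
            (fun a ha => by simp only [mem_filter, mem_Icc] at ha ⊢; omega)
            fun _ _ _ => by positivity) ?_
          refine (sum_Icc_rpow_neg_le_of_one_lt hs (Nat.succ_pos M) N).trans ?_
          exact mul_le_mul_of_nonneg_left
            (rpow_le_rpow_of_nonpos hM0 (by push_cast; linarith) (by linarith)) hC
    _ = _ := by ring

theorem sum_card_divisors_mul_min_one_div_sq_le (d N : ℕ) {c : ℝ} (hc : 0 ≤ c) :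
    ∑ n ∈ (Icc 1 N).erase d, (#n.divisors : ℝ) * min 1 (c ^ 2 / ((n : ℝ) - d) ^ 2) ≤
      4 * √N * min 1 (c ^ 2) + 12 * c * (1 + log N) := by
  set F : ℕ → ℝ := fun n => min 1 (c ^ 2 / ((n : ℝ) - d) ^ 2)
  have hrow : ∀ a ∈ Icc 1 N, ∑ b ∈ Icc a N with a * b ∈ (Icc 1 N).erase d, F (a * b) ≤
      2 * min 1 (c ^ 2) + 6 * c * (a : ℝ)⁻¹ := by
    intro a ha
    refine le_trans ?_
      ((sum_min_one_div_sq_mul_sub_le (mem_Icc.mp ha).1 d (Icc a N) hc).trans_eq (by ring))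
    refine sum_le_sum_of_subset_of_nonneg (fun b hb => ?_) fun _ _ _ => by positivity
    simp only [mem_filter, mem_erase] at hb ⊢
    exact ⟨hb.1, hb.2.1⟩
  have hvanish : ∀ a ∈ Icc 1 N, a ∉ Icc 1 (Nat.sqrt N) →
      ∑ b ∈ Icc a N with a * b ∈ (Icc 1 N).erase d, F (a * b) = 0 := by
    intro a ha ha'
    refine sum_eq_zero fun b hb => absurd ?_ ha'
    simp only [mem_filter, mem_Icc, mem_erase] at ha hb ⊢
    exact ⟨ha.1, Nat.le_sqrt.mpr (by nlinarith [hb.1.1, hb.2.2.2])⟩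
  calc ∑ n ∈ (Icc 1 N).erase d, (#n.divisors : ℝ) * F n
      ≤ 2 * ∑ a ∈ Icc 1 N, ∑ b ∈ Icc a N with a * b ∈ (Icc 1 N).erase d, F (a * b) :=
        sum_card_divisors_mul_le (erase_subset _ _) fun _ _ => by positivity
    _ = 2 * ∑ a ∈ Icc 1 (Nat.sqrt N),
          ∑ b ∈ Icc a N with a * b ∈ (Icc 1 N).erase d, F (a * b) := by
        rw [sum_subset (Icc_subset_Icc_right (Nat.sqrt_le_self N)) hvanish]
    _ ≤ 2 * ∑ a ∈ Icc 1 (Nat.sqrt N), (2 * min 1 (c ^ 2) + 6 * c * (a : ℝ)⁻¹) := by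
        gcongr with a ha
        exact hrow a (Icc_subset_Icc_right (Nat.sqrt_le_self N) ha)
    _ = 4 * Nat.sqrt N * min 1 (c ^ 2) + 12 * c * ∑ a ∈ Icc 1 (Nat.sqrt N), (a : ℝ)⁻¹ := by
        rw [sum_add_distrib, sum_const, Nat.card_Icc, ← mul_sum, nsmul_eq_mul]
        push_cast; ring
    _ ≤ 4 * √N * min 1 (c ^ 2) + 12 * c * (1 + log N) := by
        gcongr
        · exact nat_sqrt_le_real_sqrt
        · exact (sum_Icc_inv_le_one_add_log _).trans
            (add_le_add_right (log_natCast_le_log_natCast (Nat.sqrt_le_self N)) 1)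

theorem sq_sub_le_two_mul_add_mul_sq_sqrt_sub {x y : ℝ} (hx : 0 ≤ x) (hy : 0 ≤ y) :
    (x - y) ^ 2 ≤ 2 * (x + y) * (√x - √y) ^ 2 := by
  have hx' := sq_sqrt hx
  have hy' := sq_sqrt hy
  have e : x - y = (√x - √y) * (√x + √y) := by linear_combination hy' - hx'
  rw [e, mul_pow, mul_comm]
  gcongr
  nlinarith [sq_nonneg (√x - √y)]

theorem div_sq_sqrt_sub_le_of_two_mul_le {x y α : ℝ} (hx : 0 ≤ x) (hy : 0 < y) (hα : 0 < α)
    (hxy : 2 * x ≤ y) : y / (α ^ 2 * (√x - √y) ^ 2) ≤ 12 / α ^ 2 := by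
  have h := sq_sub_le_two_mul_add_mul_sq_sqrt_sub hx hy.le
  have hD : y ≤ 12 * (√x - √y) ^ 2 := by nlinarith [sq_nonneg (√x - √y)]
  rw [div_le_div_iff₀ (mul_pos (by positivity) (by linarith)) (by positivity)]
  nlinarith [sq_nonneg α]

theorem div_sq_sqrt_sub_le_of_two_mul_lt {x y α : ℝ} (hy : 0 ≤ y) (hα : 0 < α)
    (hxy : 2 * y < x) : y / (α ^ 2 * (√x - √y) ^ 2) ≤ 12 * y / (α ^ 2 * x) := by
  have hx : 0 < x := by linarith
  have h := sq_sub_le_two_mul_add_mul_sq_sqrt_sub hx.le hy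
  have hD : x ≤ 12 * (√x - √y) ^ 2 := by nlinarith [sq_nonneg (√x - √y)]
  rw [div_le_div_iff₀ (mul_pos (by positivity) (by linarith)) (by positivity)]
  nlinarith [mul_le_mul_of_nonneg_left hD (by positivity : 0 ≤ y * α ^ 2)]

theorem div_sq_sqrt_sub_le_of_le_two_mul {x y α : ℝ} (hx : 0 ≤ x) (hy : 0 ≤ y) (hα : 0 < α)
    (hxy : x ≤ 2 * y) (hne : x ≠ y) :
    y / (α ^ 2 * (√x - √y) ^ 2) ≤ (3 * y / α) ^ 2 / (x - y) ^ 2 := by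
  have h := sq_sub_le_two_mul_add_mul_sq_sqrt_sub hx hy
  have hxy' : 0 < (x - y) ^ 2 := by positivity [sub_ne_zero.mpr hne]
  have hD : 0 < (√x - √y) ^ 2 := by
    by_contra! h0; nlinarith
  rw [div_le_div_iff₀ (by positivity) hxy', div_pow, mul_pow, div_mul_eq_mul_div,
    le_div_iff₀ (by positivity)]
  have h6 : 2 * (x + y) * (y * α ^ 2 * (√x - √y) ^ 2) ≤ 6 * y * (y * α ^ 2 * (√x - √y) ^ 2) :=
    mul_le_mul_of_nonneg_right (by linarith) (by positivity)
  nlinarith [mul_le_mul_of_nonneg_left h (by positivity : 0 ≤ y * α ^ 2),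
    mul_nonneg (mul_nonneg (sq_nonneg y) (sq_nonneg α)) hD.le]

noncomputable def offDiagonalTerm (α : ℝ) (d n : ℕ) : ℝ :=
  if n = 0 ∨ n = d then 0 else
    (#n.divisors : ℝ) / (n : ℝ) ^ ((3 : ℝ) / 4) * min 1 ((d : ℝ) / (α ^ 2 * (√n - √d) ^ 2))

theorem offDiagonalTerm_nonneg (α : ℝ) (d n : ℕ) : 0 ≤ offDiagonalTerm α d n := by
  unfold offDiagonalTerm
  split_ifs
  · exact le_rfl
  · exact mul_nonneg (by positivity) (le_min zero_le_one (by positivity))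

theorem offDiagonalTerm_of_ne {α : ℝ} {d n : ℕ} (hn : n ≠ 0) (hnd : n ≠ d) :
    offDiagonalTerm α d n = (#n.divisors : ℝ) *
      (((n : ℝ) ^ ((3 : ℝ) / 4))⁻¹ * min 1 ((d : ℝ) / (α ^ 2 * (√n - √d) ^ 2))) := by
  rw [offDiagonalTerm, if_neg (not_or.mpr ⟨hn, hnd⟩), div_eq_mul_inv, mul_assoc]

theorem offDiagonalTerm_le_of_two_mul_le {α : ℝ} (hα : 0 < α) {d n : ℕ} (hn : 0 < n)
    (h : 2 * n ≤ d) :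
    offDiagonalTerm α d n ≤ 12 / α ^ 2 * ((#n.divisors : ℝ) * (n : ℝ) ^ (-(3 / 4 : ℝ))) := by
  have hn0 : (0 : ℝ) < n := by exact_mod_cast hn
  have hd0 : (0 : ℝ) < d := by exact_mod_cast (by omega : 0 < d)
  have hw := div_sq_sqrt_sub_le_of_two_mul_le hn0.le hd0 hα (by exact_mod_cast h)
  rw [offDiagonalTerm_of_ne hn.ne' (by omega), rpow_neg hn0.le]
  calc _ ≤ (#n.divisors : ℝ) * (((n : ℝ) ^ ((3 : ℝ) / 4))⁻¹ * (12 / α ^ 2)) := by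
        gcongr; exact (min_le_right _ _).trans hw
    _ = _ := by ring

theorem offDiagonalTerm_le_of_lt_two_mul {α : ℝ} (hα : 0 < α) {d n : ℕ} (hnd : n ≠ d)
    (h₁ : d < 2 * n) (h₂ : n ≤ 2 * d) :
    offDiagonalTerm α d n ≤ 2 * (d : ℝ) ^ (-(3 / 4 : ℝ)) *
      ((#n.divisors : ℝ) * min 1 ((3 * d / α) ^ 2 / ((n : ℝ) - d) ^ 2)) := by
  have hn0 : (0 : ℝ) < n := by exact_mod_cast (by omega : 0 < n)
  have hd0 : (0 : ℝ) < d := by exact_mod_cast (by omega : 0 < d)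
  have hw := div_sq_sqrt_sub_le_of_le_two_mul hn0.le hd0.le hα (by exact_mod_cast h₂)
    (by exact_mod_cast hnd)
  have hpow : ((n : ℝ) ^ ((3 : ℝ) / 4))⁻¹ ≤ 2 * (d : ℝ) ^ (-(3 / 4 : ℝ)) := by
    have hdn : (d : ℝ) / 2 ≤ n := by
      have : (d : ℝ) < 2 * n := by exact_mod_cast h₁
      linarith
    rw [← rpow_neg hn0.le]
    calc (n : ℝ) ^ (-(3 / 4 : ℝ)) ≤ ((d : ℝ) / 2) ^ (-(3 / 4 : ℝ)) :=
          rpow_le_rpow_of_nonpos (by positivity) hdn (by norm_num)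
      _ = 2 ^ (3 / 4 : ℝ) * (d : ℝ) ^ (-(3 / 4 : ℝ)) := by
          rw [div_rpow hd0.le (by norm_num), rpow_neg (by norm_num : (0 : ℝ) ≤ 2)]; field_simp
      _ ≤ 2 * (d : ℝ) ^ (-(3 / 4 : ℝ)) := by
          gcongr
          exact rpow_le_self_of_one_le (by norm_num) (by norm_num)
  rw [offDiagonalTerm_of_ne (by omega) hnd, mul_left_comm]
  gcongr

theorem offDiagonalTerm_le_of_two_mul_lt {α : ℝ} (hα : 0 < α) {d n : ℕ} (h : 2 * d < n) :
    offDiagonalTerm α d n ≤ 12 * d / α ^ 2 * ((#n.divisors : ℝ) * (n : ℝ) ^ (-(7 / 4 : ℝ))) := by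
  have hn0 : (0 : ℝ) < n := by exact_mod_cast (by omega : 0 < n)
  have hw := div_sq_sqrt_sub_le_of_two_mul_lt (x := n) (Nat.cast_nonneg d) hα
    (by exact_mod_cast h)
  have e : (n : ℝ) ^ (-(7 / 4 : ℝ)) = ((n : ℝ) ^ ((3 : ℝ) / 4))⁻¹ * (n : ℝ)⁻¹ := by
    rw [← rpow_neg hn0.le, ← rpow_neg_one, ← rpow_add hn0]; norm_num
  rw [offDiagonalTerm_of_ne (by omega) (by omega), e]
  calc _ ≤ (#n.divisors : ℝ) * (((n : ℝ) ^ ((3 : ℝ) / 4))⁻¹ * (12 * d / (α ^ 2 * n))) := by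
        gcongr; exact (min_le_right _ _).trans hw
    _ = _ := by field_simp

theorem offDiagonalTerm_le_sum_ite {α : ℝ} (hα : 0 < α) {d n N : ℕ} (hn : n < N) :
    offDiagonalTerm α d n ≤
      (if n ∈ Icc 1 (d / 2) then
        12 / α ^ 2 * ((#n.divisors : ℝ) * (n : ℝ) ^ (-(3 / 4 : ℝ))) else 0) +
      (if n ∈ (Icc 1 (2 * d)).erase d then 2 * (d : ℝ) ^ (-(3 / 4 : ℝ)) *
        ((#n.divisors : ℝ) * min 1 ((3 * d / α) ^ 2 / ((n : ℝ) - d) ^ 2)) else 0) +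
      (if n ∈ Ioc (2 * d) N then
        12 * d / α ^ 2 * ((#n.divisors : ℝ) * (n : ℝ) ^ (-(7 / 4 : ℝ))) else 0) := by
  have h₁ : 0 ≤ if n ∈ Icc 1 (d / 2) then
      12 / α ^ 2 * ((#n.divisors : ℝ) * (n : ℝ) ^ (-(3 / 4 : ℝ))) else 0 := by
    split_ifs <;> positivity
  have h₂ : 0 ≤ if n ∈ (Icc 1 (2 * d)).erase d then 2 * (d : ℝ) ^ (-(3 / 4 : ℝ)) *
      ((#n.divisors : ℝ) * min 1 ((3 * d / α) ^ 2 / ((n : ℝ) - d) ^ 2)) else 0 := by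
    split_ifs
    · exact mul_nonneg (by positivity)
        (mul_nonneg (by positivity) (le_min zero_le_one (by positivity)))
    · exact le_rfl
  have h₃ : 0 ≤ if n ∈ Ioc (2 * d) N then
      12 * d / α ^ 2 * ((#n.divisors : ℝ) * (n : ℝ) ^ (-(7 / 4 : ℝ))) else 0 := by
    split_ifs <;> positivity
  by_cases h0 : n = 0 ∨ n = d
  · rw [offDiagonalTerm, if_pos h0]; linarith
  push Not at h0
  rcases (by omega : 2 * n ≤ d ∨ (d < 2 * n ∧ n ≤ 2 * d) ∨ 2 * d < n) with h | h | h
  · rw [if_pos (show n ∈ Icc 1 (d / 2) by simp only [mem_Icc]; omega)]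
    linarith [offDiagonalTerm_le_of_two_mul_le hα (Nat.pos_of_ne_zero h0.1) h]
  · rw [if_pos (show n ∈ (Icc 1 (2 * d)).erase d by simp only [mem_erase, mem_Icc]; omega)]
    linarith [offDiagonalTerm_le_of_lt_two_mul hα h0.2 h.1 h.2]
  · rw [if_pos (show n ∈ Ioc (2 * d) N by simp only [mem_Ioc]; omega)]
    linarith [offDiagonalTerm_le_of_two_mul_lt hα h]

theorem sum_range_offDiagonalTerm_le {α : ℝ} (hα : 0 < α) (d N : ℕ) :
    ∑ n ∈ range N, offDiagonalTerm α d n ≤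
      12 / α ^ 2 * ∑ n ∈ Icc 1 (d / 2), (#n.divisors : ℝ) * (n : ℝ) ^ (-(3 / 4 : ℝ)) +
      2 * (d : ℝ) ^ (-(3 / 4 : ℝ)) * ∑ n ∈ (Icc 1 (2 * d)).erase d,
        (#n.divisors : ℝ) * min 1 ((3 * d / α) ^ 2 / ((n : ℝ) - d) ^ 2) +
      12 * d / α ^ 2 * ∑ n ∈ Ioc (2 * d) N, (#n.divisors : ℝ) * (n : ℝ) ^ (-(7 / 4 : ℝ)) := by
  refine (sum_le_sum fun n hn => offDiagonalTerm_le_sum_ite hα (mem_range.mp hn)).trans ?_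
  rw [sum_add_distrib, sum_add_distrib, sum_ite_mem, sum_ite_mem, sum_ite_mem, mul_sum, mul_sum,
    mul_sum]
  refine add_le_add (add_le_add ?_ ?_) ?_ <;>
    refine sum_le_sum_of_subset_of_nonneg inter_subset_right fun n _ _ => ?_
  · positivity
  · exact mul_nonneg (by positivity)
      (mul_nonneg (by positivity) (le_min zero_le_one (by positivity)))
  · positivity

theorem inv_le_rpow_neg_one_third {α : ℝ} (hα : 1 ≤ α) : α⁻¹ ≤ α ^ (-(1 : ℝ) / 3) := by
  rw [← rpow_neg_one]; exact rpow_le_rpow_of_exponent_le hα (by norm_num)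

theorem inv_sq_le_rpow_neg_one_third {α : ℝ} (hα : 1 ≤ α) : (α ^ 2)⁻¹ ≤ α ^ (-(1 : ℝ) / 3) :=
  (inv_anti₀ (by linarith) (by nlinarith)).trans (inv_le_rpow_neg_one_third hα)

theorem rpow_neg_three_quarters_mul_self {x : ℝ} (hx : 0 < x) :
    x ^ (-(3 / 4 : ℝ)) * x = x ^ ((1 : ℝ) / 4) := by
  rw [← rpow_add_one hx.ne']; norm_num

theorem one_add_log_le_three_mul_log {x : ℝ} (hx : 2 ≤ x) : 1 + log x ≤ 3 * log x := by
  have := log_two_gt_d9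
  have := log_le_log two_pos hx
  linarith

theorem log_two_mul_natCast_nonneg (d : ℕ) : 0 ≤ log (2 * d) := by
  simpa using log_natCast_nonneg (2 * d)

theorem lower_range_sum_le {α : ℝ} (hα : 1 ≤ α) (d : ℕ) :
    12 / α ^ 2 * ∑ n ∈ Icc 1 (d / 2), (#n.divisors : ℝ) * (n : ℝ) ^ (-(3 / 4 : ℝ)) ≤
      96 * (α ^ (-(1 : ℝ) / 3) * (d : ℝ) ^ ((1 : ℝ) / 4) * (1 + log (2 * d))) := by
  have h1 : ((d / 2 : ℕ) : ℝ) ^ ((1 : ℝ) / 4) ≤ (d : ℝ) ^ ((1 : ℝ) / 4) :=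
    rpow_le_rpow (by positivity) (by exact_mod_cast Nat.div_le_self d 2) (by norm_num)
  have h2 : log ((d / 2 : ℕ) : ℝ) ≤ log (2 * d) := by
    rw [show (2 * d : ℝ) = ((2 * d : ℕ) : ℝ) by push_cast; ring]
    exact log_natCast_le_log_natCast (by omega)
  have h3 := log_natCast_nonneg (d / 2)
  calc _ ≤ 12 / α ^ 2 * (2 / (1 - 3 / 4) * ((d / 2 : ℕ) : ℝ) ^ (1 - 3 / 4 : ℝ) *
        (1 + log ((d / 2 : ℕ) : ℝ))) := by
        gcongr; exact sum_card_divisors_mul_rpow_neg_le (by norm_num) (by norm_num) (d / 2)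
    _ = 96 * ((α ^ 2)⁻¹ * ((d / 2 : ℕ) : ℝ) ^ ((1 : ℝ) / 4) * (1 + log ((d / 2 : ℕ) : ℝ))) := by
        norm_num; ring
    _ ≤ _ := by gcongr; exact inv_sq_le_rpow_neg_one_third hα

theorem rpow_mul_sqrt_mul_min_one_sq_le {α : ℝ} (hα : 0 < α) {d : ℝ} (hd : 1 ≤ d) :
    2 * d ^ (-(3 / 4 : ℝ)) * (4 * √(2 * d) * min 1 ((3 * d / α) ^ 2)) ≤
      24 * (α ^ (-(1 : ℝ) / 3) * d ^ ((1 : ℝ) / 4)) := by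
  have hd0 : 0 < d := by linarith
  have h1 : min 1 ((3 * d / α) ^ 2) ≤
      3 ^ ((1 : ℝ) / 3) * d ^ ((1 : ℝ) / 3) * α ^ (-(1 : ℝ) / 3) := by
    refine (min_one_le_rpow (by positivity) (by norm_num : (0 : ℝ) ≤ 1 / 6)
      (by norm_num)).trans_eq ?_
    rw [← rpow_natCast, ← rpow_mul (by positivity), div_rpow (by positivity) hα.le,
      mul_rpow (by norm_num) hd0.le, show -(1 : ℝ) / 3 = -(1 / 3) by ring, rpow_neg hα.le]
    norm_num; ring
  have h2 : √(2 * d) = √2 * d ^ ((1 : ℝ) / 2) := by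
    rw [sqrt_mul (by norm_num), ← sqrt_eq_rpow]
  have h3 : d ^ (-(3 / 4 : ℝ)) * d ^ ((1 : ℝ) / 2) * d ^ ((1 : ℝ) / 3) ≤ d ^ ((1 : ℝ) / 4) := by
    rw [← rpow_add hd0, ← rpow_add hd0]
    exact rpow_le_rpow_of_exponent_le hd (by norm_num)
  have h4 : √2 * 3 ^ ((1 : ℝ) / 3) ≤ 3 := by
    have : √2 ≤ 3 / 2 := by rw [sqrt_le_left (by norm_num)]; norm_num
    have : (3 : ℝ) ^ ((1 : ℝ) / 3) ≤ 3 / 2 :=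
      calc (3 : ℝ) ^ ((1 : ℝ) / 3) ≤ ((3 / 2 : ℝ) ^ 3) ^ ((1 : ℝ) / 3) :=
            rpow_le_rpow (by norm_num) (by norm_num) (by norm_num)
        _ = 3 / 2 := by rw [← rpow_natCast, ← rpow_mul (by norm_num)]; norm_num
    nlinarith [sqrt_nonneg 2]
  calc _ ≤ 2 * d ^ (-(3 / 4 : ℝ)) *
        (4 * √(2 * d) * (3 ^ ((1 : ℝ) / 3) * d ^ ((1 : ℝ) / 3) * α ^ (-(1 : ℝ) / 3))) := by
        gcongr
    _ = 8 * (√2 * 3 ^ ((1 : ℝ) / 3)) * α ^ (-(1 : ℝ) / 3) *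
        (d ^ (-(3 / 4 : ℝ)) * d ^ ((1 : ℝ) / 2) * d ^ ((1 : ℝ) / 3)) := by rw [h2]; ring
    _ ≤ 8 * 3 * α ^ (-(1 : ℝ) / 3) * d ^ ((1 : ℝ) / 4) := by gcongr
    _ = _ := by ring

theorem middle_range_sum_le {α : ℝ} (hα : 1 ≤ α) {d : ℕ} (hd : 0 < d) :
    2 * (d : ℝ) ^ (-(3 / 4 : ℝ)) * ∑ n ∈ (Icc 1 (2 * d)).erase d,
        (#n.divisors : ℝ) * min 1 ((3 * d / α) ^ 2 / ((n : ℝ) - d) ^ 2) ≤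
      96 * (α ^ (-(1 : ℝ) / 3) * (d : ℝ) ^ ((1 : ℝ) / 4) * (1 + log (2 * d))) := by
  have hα0 : 0 < α := by linarith
  have hd0 : (0 : ℝ) < d := by exact_mod_cast hd
  have hL := log_two_mul_natCast_nonneg d
  have hsum := sum_card_divisors_mul_min_one_div_sq_le d (2 * d) (c := 3 * d / α) (by positivity)
  push_cast at hsum
  have hsmall := rpow_mul_sqrt_mul_min_one_sq_le hα0 (d := d) (by exact_mod_cast hd)
  have hlarge : 2 * (d : ℝ) ^ (-(3 / 4 : ℝ)) * (12 * (3 * d / α) * (1 + log (2 * d))) ≤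
      72 * (α ^ (-(1 : ℝ) / 3) * (d : ℝ) ^ ((1 : ℝ) / 4) * (1 + log (2 * d))) :=
    calc _ = 72 * (α⁻¹ * ((d : ℝ) ^ (-(3 / 4 : ℝ)) * d) * (1 + log (2 * d))) := by ring
      _ ≤ _ := by
          rw [rpow_neg_three_quarters_mul_self hd0]; gcongr; exact inv_le_rpow_neg_one_third hα
  have hAP : 0 ≤ α ^ (-(1 : ℝ) / 3) * (d : ℝ) ^ ((1 : ℝ) / 4) := by positivity
  calc _ ≤ 2 * (d : ℝ) ^ (-(3 / 4 : ℝ)) * (4 * √(2 * d) * min 1 ((3 * d / α) ^ 2) +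
        12 * (3 * d / α) * (1 + log (2 * d))) := by gcongr
    _ ≤ _ := by nlinarith

theorem upper_range_sum_le {α : ℝ} (hα : 1 ≤ α) {d : ℕ} (hd : 0 < d) (N : ℕ) :
    12 * d / α ^ 2 * ∑ n ∈ Ioc (2 * d) N, (#n.divisors : ℝ) * (n : ℝ) ^ (-(7 / 4 : ℝ)) ≤
      190 * (α ^ (-(1 : ℝ) / 3) * (d : ℝ) ^ ((1 : ℝ) / 4) * (1 + log (2 * d))) := by
  have hd0 : (0 : ℝ) < d := by exact_mod_cast hd
  have hL := log_two_mul_natCast_nonneg d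
  have h1 : (2 * d : ℝ) ^ (-(3 / 4 : ℝ)) ≤ (d : ℝ) ^ (-(3 / 4 : ℝ)) :=
    rpow_le_rpow_of_nonpos hd0 (by linarith) (by norm_num)
  have hsum := sum_Ioc_card_divisors_mul_rpow_neg_le (s := 7 / 4) (by norm_num)
    (by omega : 0 < 2 * d) N
  norm_num at hsum
  calc _ ≤ 12 * d / α ^ 2 * (14 / 3 * (2 * d : ℝ) ^ (-(3 / 4 : ℝ)) *
        (1 + log (2 * d) + 7 / 3)) := by gcongr
    _ ≤ 12 * d / α ^ 2 * (14 / 3 * (d : ℝ) ^ (-(3 / 4 : ℝ)) *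
        (1 + log (2 * d) + 7 / 3)) := by gcongr
    _ = 56 * ((α ^ 2)⁻¹ * ((d : ℝ) ^ (-(3 / 4 : ℝ)) * d) * (10 / 3 + log (2 * d))) := by ring
    _ ≤ 56 * (α ^ (-(1 : ℝ) / 3) * (d : ℝ) ^ ((1 : ℝ) / 4) * (10 / 3 * (1 + log (2 * d)))) := by
        rw [rpow_neg_three_quarters_mul_self hd0]
        gcongr
        · exact inv_sq_le_rpow_neg_one_third hα
        · linarith
    _ ≤ _ := by nlinarith [show 0 ≤ α ^ (-(1 : ℝ) / 3) * (d : ℝ) ^ ((1 : ℝ) / 4) by positivity]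

theorem offdiagonal_divisor_sum_bound :
    ∃ C > (0 : ℝ), ∀ α : ℝ, 2 ≤ α → ∀ d : ℕ, Squarefree d →
      ∑' n : ℕ, (if n = 0 ∨ n = d then 0 else
          (n.divisors.card : ℝ) / (n : ℝ) ^ ((3 : ℝ) / 4) *
            min 1 ((d : ℝ) / (α ^ 2 * (Real.sqrt n - Real.sqrt d) ^ 2)))
        ≤ C * α ^ (-(1 : ℝ) / 3) * (d : ℝ) ^ ((1 : ℝ) / 4) * Real.log (2 * d) := by
  refine ⟨1200, by norm_num, fun α hα d hd => ?_⟩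
  have hα1 : 1 ≤ α := by linarith
  have hd0 : 0 < d := Nat.pos_of_ne_zero hd.ne_zero
  have hlog := one_add_log_le_three_mul_log (x := 2 * d) (by
    have : (1 : ℝ) ≤ d := by exact_mod_cast hd0
    linarith)
  have hAP : 0 ≤ α ^ (-(1 : ℝ) / 3) * (d : ℝ) ^ ((1 : ℝ) / 4) := by positivity
  refine Real.tsum_le_of_sum_range_le (offDiagonalTerm_nonneg α d) fun N => ?_
  calc _ ≤ _ := sum_range_offDiagonalTerm_le (by linarith) d N
    _ ≤ (96 + 96 + 190) * (α ^ (-(1 : ℝ) / 3) * (d : ℝ) ^ ((1 : ℝ) / 4) * (1 + log (2 * d))) := by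
        linarith [lower_range_sum_le hα1 d, middle_range_sum_le hα1 hd0,
          upper_range_sum_le hα1 hd0 N]
    _ ≤ _ := by nlinarith [mul_le_mul_of_nonneg_left hlog hAP]
end

section
/- For any α ≥ 1 and d ≥ 1, ∑_{n ≥ 1} (d(n)/n^{3/4}) · min(1, d/(α² n)) ≪ α^{−1/2} d^{1/4} log(2d), with an absolute implied constant. -/
/-!
Write `d(n) = ∑_{ab = n} 1` and `D = d / α²`, so that the sum is at most
`∑_a a^(-3/4) ∑_b b^(-3/4) min(1, (D/a)/b)`. The tangent-line (Bernoulli) inequalities of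
`t ↦ t^p` telescope into the p-series bounds `∑_{k ≤ x} k^(-s) ≤ x^(1-s)/(1-s)` and
`∑_{k > x} k^(-s-1) ≤ (s+1)/s · x^(-s)`; splitting at `b = D/a` they bound the inner sum by
`≪ min((D/a)^(1/4), D/a)`. Splitting the outer sum at `a = D` leaves
`D^(1/4) ∑_{a ≤ D} 1/a + D ∑_{a > D} a^(-7/4) ≪ D^(1/4) (1 + log d)`,
and `D^(1/4) = α^(-1/2) d^(1/4)`.
-/

open Finset

namespace Real

theorem one_add_mul_le_rpow_one_add_of_nonpos {u p : ℝ} (hu : -1 < u) (hp : p ≤ 0) :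
    1 + p * u ≤ (1 + u) ^ p := by
  have hlog : log (1 + u) ≤ u := by linarith [log_le_sub_one_of_pos (by linarith : 0 < 1 + u)]
  rw [rpow_def_of_pos (by linarith)]
  nlinarith [add_one_le_exp (log (1 + u) * p)]

theorem one_sub_mul_rpow_neg_le {s x : ℝ} (hs0 : 0 ≤ s) (hs1 : s ≤ 1) (hx : 1 ≤ x) :
    (1 - s) * x ^ (-s) ≤ x ^ (1 - s) - (x - 1) ^ (1 - s) := by
  have hx0 : 0 < x := by linarith
  have hb := rpow_one_add_le_one_add_mul_self (s := -x⁻¹)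
    (by linarith [inv_le_one_of_one_le₀ hx]) (p := 1 - s) (by linarith) (by linarith)
  have hsplit : (x - 1) ^ (1 - s) = (1 + -x⁻¹) ^ (1 - s) * x ^ (1 - s) := by
    rw [← mul_rpow (by linarith [inv_le_one_of_one_le₀ hx]) hx0.le]
    congr 1
    field_simp
    ring
  have hpow : x ^ (-s) = x ^ (1 - s) * x⁻¹ := by
    rw [← div_eq_mul_inv, ← rpow_sub_one hx0.ne']
    ring_nf
  rw [hsplit, hpow]
  nlinarith [rpow_pos_of_pos hx0 (1 - s)]

theorem mul_rpow_neg_sub_one_le {s x : ℝ} (hs : 0 ≤ s) (hx : 1 < x) :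
    s * x ^ (-s - 1) ≤ (x - 1) ^ (-s) - x ^ (-s) := by
  have hx0 : 0 < x := by linarith
  have hb := one_add_mul_le_rpow_one_add_of_nonpos (u := -x⁻¹)
    (by linarith [inv_lt_one_of_one_lt₀ hx]) (p := -s) (by linarith)
  have hsplit : (x - 1) ^ (-s) = (1 + -x⁻¹) ^ (-s) * x ^ (-s) := by
    rw [← mul_rpow (by linarith [inv_lt_one_of_one_lt₀ hx]) hx0.le]
    congr 1
    field_simp
    ring
  rw [hsplit, rpow_sub_one hx0.ne', div_eq_mul_inv]
  nlinarith [rpow_pos_of_pos hx0 (-s)]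

end Real

theorem one_sub_mul_sum_Icc_rpow_neg_le {s : ℝ} (hs0 : 0 ≤ s) (hs1 : s ≤ 1) (N : ℕ) :
    (1 - s) * ∑ k ∈ Icc 1 N, (k : ℝ) ^ (-s) ≤ (N : ℝ) ^ (1 - s) := by
  induction N with
  | zero => simpa using Real.rpow_nonneg le_rfl (1 - s)
  | succ N ih =>
    have := Real.one_sub_mul_rpow_neg_le hs0 hs1 (x := N + 1)
      (by linarith [N.cast_nonneg (α := ℝ)])
    rw [sum_Icc_succ_top (by omega), mul_add]
    push_cast at this ⊢
    simp only [add_sub_cancel_right] at this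
    linarith

theorem mul_sum_Icc_rpow_neg_sub_one_le {s : ℝ} (hs : 0 ≤ s) {m : ℕ} (hm : 1 ≤ m)
    (M : ℕ) :
    s * ∑ k ∈ Icc m M, (k : ℝ) ^ (-s - 1) ≤ (s + 1) * (m : ℝ) ^ (-s) := by
  have hm1 : (1 : ℝ) ≤ m := by exact_mod_cast hm
  have hmm : (m : ℝ) ^ (-s - 1) ≤ (m : ℝ) ^ (-s) :=
    Real.rpow_le_rpow_of_exponent_le hm1 (by linarith)
  rcases lt_or_ge M m with hM | hM
  · rw [Icc_eq_empty (by omega), sum_empty, mul_zero]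
    positivity
  suffices h : s * ∑ k ∈ Icc m M, (k : ℝ) ^ (-s - 1)
      ≤ s * (m : ℝ) ^ (-s - 1) + (m : ℝ) ^ (-s) - (M : ℝ) ^ (-s) by
    nlinarith [Real.rpow_nonneg (M.cast_nonneg (α := ℝ)) (-s)]
  induction M, hM using Nat.le_induction with
  | base => simp
  | succ M hmM ih =>
    have := Real.mul_rpow_neg_sub_one_le hs (x := M + 1)
      (by linarith [(Nat.one_le_cast (α := ℝ)).mpr (hm.trans hmM)])
    rw [sum_Icc_succ_top (by omega), mul_add]
    push_cast at this ⊢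
    simp only [add_sub_cancel_right] at this
    linarith

theorem sum_Icc_floor_rpow_neg_le {s x : ℝ} (hs0 : 0 ≤ s) (hs1 : s < 1) (hx : 0 ≤ x) :
    ∑ k ∈ Icc 1 ⌊x⌋₊, (k : ℝ) ^ (-s) ≤ x ^ (1 - s) / (1 - s) := by
  rw [le_div_iff₀ (by linarith), mul_comm]
  exact (one_sub_mul_sum_Icc_rpow_neg_le hs0 hs1.le _).trans
    (Real.rpow_le_rpow (by positivity) (Nat.floor_le hx) (by linarith))

theorem sum_Icc_floor_add_one_rpow_neg_sub_one_le {s x : ℝ} (hs : 0 < s) (hx : 0 < x)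
    (M : ℕ) :
    ∑ k ∈ Icc (⌊x⌋₊ + 1) M, (k : ℝ) ^ (-s - 1) ≤ (s + 1) / s * x ^ (-s) := by
  have hfloor : x ≤ ((⌊x⌋₊ + 1 : ℕ) : ℝ) := by
    push_cast
    exact (Nat.lt_floor_add_one x).le
  rw [div_mul_eq_mul_div, le_div_iff₀ hs, mul_comm]
  refine (mul_sum_Icc_rpow_neg_sub_one_le hs.le (by omega) M).trans ?_
  exact mul_le_mul_of_nonneg_left (Real.rpow_le_rpow_of_nonpos hx hfloor (by linarith))
    (by linarith)

theorem sum_Icc_le_add_of_le_of_lt {f g h : ℕ → ℝ} {N : ℕ} (hg0 : ∀ k, 0 ≤ g k)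
    (hfg : ∀ k, 0 < k → k ≤ N → f k ≤ g k) (hfh : ∀ k, N < k → f k ≤ h k)
    (M : ℕ) :
    ∑ k ∈ Icc 1 M, f k ≤ ∑ k ∈ Icc 1 N, g k + ∑ k ∈ Icc (N + 1) M, h k := by
  rw [← sum_filter_add_sum_filter_not (Icc 1 M) (· ≤ N)]
  have hhigh : {k ∈ Icc 1 M | ¬k ≤ N} = Icc (N + 1) M := by
    ext k
    simp only [mem_filter, mem_Icc]
    omega
  rw [hhigh]
  gcongr with k hk
  · calc ∑ k ∈ Icc 1 M with k ≤ N, f k ≤ ∑ k ∈ Icc 1 M with k ≤ N, g k :=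
          sum_le_sum fun k hk => by
            simp only [mem_filter, mem_Icc] at hk
            exact hfg k (by omega) hk.2
      _ ≤ ∑ k ∈ Icc 1 N, g k := sum_le_sum_of_subset_of_nonneg
          (fun k hk => by simp only [mem_filter, mem_Icc] at hk ⊢; omega) fun k _ _ => hg0 k
  · exact hfh k (by simp only [mem_Icc] at hk; omega)

theorem sum_Icc_rpow_neg_mul_min_le {s t : ℝ} (hs0 : 0 < s) (hs1 : s < 1) (ht : 0 < t)
    (M : ℕ) :
    ∑ k ∈ Icc 1 M, (k : ℝ) ^ (-s) * min 1 (t / k) ≤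
      (1 / (1 - s) + (s + 1) / s) * min (t ^ (1 - s)) t := by
  have hs1' : 0 < 1 - s := by linarith
  have hterm : ∀ k : ℕ, 0 < k →
      (k : ℝ) ^ (-s) * min 1 (t / k) ≤ t * (k : ℝ) ^ (-s - 1) := by
    intro k hk
    have hk0 : (0 : ℝ) < k := by exact_mod_cast hk
    rw [Real.rpow_sub_one hk0.ne']
    calc (k : ℝ) ^ (-s) * min 1 (t / k) ≤ (k : ℝ) ^ (-s) * (t / k) :=
          mul_le_mul_of_nonneg_left (min_le_right _ _) (by positivity)
      _ = t * ((k : ℝ) ^ (-s) / k) := by ring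
  have hsmall : ∑ k ∈ Icc 1 M, (k : ℝ) ^ (-s) * min 1 (t / k) ≤
      (1 / (1 - s) + (s + 1) / s) * t ^ (1 - s) := by
    refine (sum_Icc_le_add_of_le_of_lt (N := ⌊t⌋₊) (g := fun k => (k : ℝ) ^ (-s))
      (h := fun k => t * (k : ℝ) ^ (-s - 1)) (fun k => by positivity)
      (fun k _ _ => mul_le_of_le_one_right (by positivity) (min_le_left _ _))
      (fun k hk => hterm k (by omega)) M).trans ?_
    rw [← mul_sum]
    have hhead := sum_Icc_floor_rpow_neg_le hs0.le hs1 ht.le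
    have htail :=
      mul_le_mul_of_nonneg_left (sum_Icc_floor_add_one_rpow_neg_sub_one_le hs0 ht M) ht.le
    have htt : t * t ^ (-s) = t ^ (1 - s) := by
      rw [Real.rpow_sub ht, Real.rpow_one, Real.rpow_neg ht.le, div_eq_mul_inv]
    calc _ ≤ t ^ (1 - s) / (1 - s) + t * ((s + 1) / s * t ^ (-s)) := add_le_add hhead htail
      _ = _ := by rw [mul_left_comm, htt]; ring
  have hlarge : ∑ k ∈ Icc 1 M, (k : ℝ) ^ (-s) * min 1 (t / k) ≤ (s + 1) / s * t := by
    calc _ ≤ ∑ k ∈ Icc 1 M, t * (k : ℝ) ^ (-s - 1) :=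
          sum_le_sum fun k hk => hterm k (by simp only [mem_Icc] at hk; omega)
      _ ≤ t * ((s + 1) / s) := by
          rw [← mul_sum]
          gcongr
          rw [le_div_iff₀ hs0, mul_comm]
          simpa using mul_sum_Icc_rpow_neg_sub_one_le hs0.le le_rfl M
      _ = _ := mul_comm _ _
  rw [mul_min_of_nonneg _ _ (by positivity)]
  refine le_min hsmall (hlarge.trans ?_)
  gcongr
  exact le_add_of_nonneg_left (by positivity)

theorem sum_Icc_rpow_neg_mul_min_rpow_le {s D : ℝ} (hs0 : 0 < s) (hD : 0 < D) (M : ℕ) :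
    ∑ a ∈ Icc 1 M, (a : ℝ) ^ (-s) * min ((D / a) ^ (1 - s)) (D / a) ≤
      D ^ (1 - s) * (harmonic ⌊D⌋₊ + (s + 1) / s) := by
  have hhead : ∀ a : ℕ, 0 < a →
      (a : ℝ) ^ (-s) * (D / a) ^ (1 - s) = D ^ (1 - s) * (a : ℝ)⁻¹ := by
    intro a ha
    have ha0 : (0 : ℝ) < a := by exact_mod_cast ha
    rw [Real.div_rpow hD.le ha0.le, ← Real.rpow_neg_one, mul_div_assoc', mul_comm,
      mul_div_assoc, ← Real.rpow_sub ha0]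
    ring_nf
  have htail : ∀ a : ℕ, 0 < a → (a : ℝ) ^ (-s) * (D / a) = D * (a : ℝ) ^ (-s - 1) := by
    intro a ha
    rw [Real.rpow_sub_one (by positivity)]
    ring
  refine (sum_Icc_le_add_of_le_of_lt (N := ⌊D⌋₊) (g := fun a => D ^ (1 - s) * (a : ℝ)⁻¹)
    (h := fun a => D * (a : ℝ) ^ (-s - 1)) (fun a => by positivity) (fun a ha _ => ?_)
    (fun a ha => ?_) M).trans ?_
  · rw [← hhead a ha]
    exact mul_le_mul_of_nonneg_left (min_le_left _ _) (by positivity)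
  · rw [← htail a (by omega)]
    exact mul_le_mul_of_nonneg_left (min_le_right _ _) (by positivity)
  · have hDD : D * D ^ (-s) = D ^ (1 - s) := by
      rw [Real.rpow_sub hD, Real.rpow_one, Real.rpow_neg hD.le, div_eq_mul_inv]
    rw [← mul_sum, ← mul_sum, harmonic_eq_sum_Icc]
    push_cast
    have := mul_le_mul_of_nonneg_left
      (sum_Icc_floor_add_one_rpow_neg_sub_one_le hs0 hD M) hD.le
    rw [mul_left_comm, hDD] at this
    linarith

theorem sum_range_card_divisors_mul_le {g : ℕ → ℝ} (hg : ∀ n, 0 ≤ g n) (M : ℕ) :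
    ∑ n ∈ range M, (n.divisors.card : ℝ) * g n ≤
      ∑ a ∈ Icc 1 M, ∑ b ∈ Icc 1 M, g (a * b) := by
  rw [← sum_product' (f := fun a b => g (a * b))]
  refine le_trans ?_ (sum_fiberwise_le_sum_of_sum_fiber_nonneg (t := range M)
    (g := fun p : ℕ × ℕ => p.1 * p.2) fun _ _ => sum_nonneg fun _ _ => hg _)
  refine sum_le_sum fun n hn => ?_
  calc (n.divisors.card : ℝ) * g n = ∑ p ∈ n.divisorsAntidiagonal, g (p.1 * p.2) := by
        rw [Nat.sum_divisorsAntidiagonal (fun a b => g (a * b))]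
        rw [sum_congr rfl fun a ha => by rw [Nat.mul_div_cancel' (Nat.dvd_of_mem_divisors ha)]]
        simp
    _ ≤ _ := by
        refine sum_le_sum_of_subset_of_nonneg (fun p hp => ?_) fun _ _ _ => hg _
        obtain ⟨hpn, hn0⟩ := Nat.mem_divisorsAntidiagonal.mp hp
        have hnM := mem_range.mp hn
        have h1 : p.1 ≠ 0 := fun h => hn0 (by rw [← hpn, h, zero_mul])
        have h2 : p.2 ≠ 0 := fun h => hn0 (by rw [← hpn, h, mul_zero])
        have h1n : p.1 ≤ n := hpn ▸ Nat.le_mul_of_pos_right _ (Nat.pos_of_ne_zero h2)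
        have h2n : p.2 ≤ n := hpn ▸ Nat.le_mul_of_pos_left _ (Nat.pos_of_ne_zero h1)
        simp only [mem_filter, mem_product, mem_Icc]
        omega

theorem sum_range_card_divisors_mul_rpow_neg_mul_min_le {s D : ℝ} (hs0 : 0 < s) (hs1 : s < 1)
    (hD : 0 < D) (M : ℕ) :
    ∑ n ∈ range M, (n.divisors.card : ℝ) * ((n : ℝ) ^ (-s) * min 1 (D / n)) ≤
      (1 / (1 - s) + (s + 1) / s) * D ^ (1 - s) * (harmonic ⌊D⌋₊ + (s + 1) / s) := by
  have hfactor : ∀ a b : ℕ, ((a * b : ℕ) : ℝ) ^ (-s) * min 1 (D / (a * b : ℕ)) =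
      (a : ℝ) ^ (-s) * ((b : ℝ) ^ (-s) * min 1 (D / a / b)) := by
    intro a b
    rw [Nat.cast_mul, Real.mul_rpow (by positivity) (by positivity), div_div]
    ring
  refine (sum_range_card_divisors_mul_le (fun n => by positivity) M).trans ?_
  simp_rw [hfactor, ← mul_sum]
  calc ∑ a ∈ Icc 1 M, (a : ℝ) ^ (-s) * ∑ b ∈ Icc 1 M, (b : ℝ) ^ (-s) * min 1 (D / a / b)
      ≤ ∑ a ∈ Icc 1 M, (a : ℝ) ^ (-s) *
          ((1 / (1 - s) + (s + 1) / s) * min ((D / a) ^ (1 - s)) (D / a)) := by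
        gcongr with a ha
        exact sum_Icc_rpow_neg_mul_min_le hs0 hs1
          (div_pos hD (by have := (mem_Icc.mp ha).1; positivity)) M
    _ = (1 / (1 - s) + (s + 1) / s) *
          ∑ a ∈ Icc 1 M, (a : ℝ) ^ (-s) * min ((D / a) ^ (1 - s)) (D / a) := by
        rw [mul_sum]
        exact sum_congr rfl fun _ _ => by ring
    _ ≤ _ := by
        rw [mul_assoc]
        gcongr
        exact sum_Icc_rpow_neg_mul_min_rpow_le hs0 hD M

theorem tsum_card_divisors_mul_rpow_neg_mul_min_le {s D : ℝ} (hs0 : 0 < s) (hs1 : s < 1)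
    (hD : 0 < D) :
    ∑' n : ℕ, (n.divisors.card : ℝ) * ((n : ℝ) ^ (-s) * min 1 (D / n)) ≤
      (1 / (1 - s) + (s + 1) / s) * D ^ (1 - s) * (harmonic ⌊D⌋₊ + (s + 1) / s) :=
  Real.tsum_le_of_sum_range_le (fun _ => by positivity)
    (sum_range_card_divisors_mul_rpow_neg_mul_min_le hs0 hs1 hD)

theorem harmonic_floor_le_one_add_log_of_le {x : ℝ} {d : ℕ} (hd : 1 ≤ d) (hxd : x ≤ d) :
    (harmonic ⌊x⌋₊ : ℝ) ≤ 1 + Real.log d := by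
  rcases lt_or_ge x 1 with hx | hx
  · rw [Nat.floor_eq_zero.mpr hx, harmonic_zero, Rat.cast_zero]
    linarith [Real.log_nonneg (Nat.one_le_cast.mpr hd : (1 : ℝ) ≤ d)]
  · linarith [harmonic_floor_le_one_add_log x hx, Real.log_le_log (by linarith) hxd]

theorem diagonal_divisor_sum_bound :
    ∃ C > (0 : ℝ), ∀ α : ℝ, 1 ≤ α → ∀ d : ℕ, 1 ≤ d →
      ∑' n : ℕ, (if n = 0 then 0 else
          (n.divisors.card : ℝ) / (n : ℝ) ^ ((3 : ℝ) / 4) *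
            min 1 ((d : ℝ) / (α ^ 2 * n)))
        ≤ C * α ^ (-(1 : ℝ) / 2) * (d : ℝ) ^ ((1 : ℝ) / 4) * Real.log (2 * d) := by
  refine ⟨32, by norm_num, fun α hα d hd => ?_⟩
  have hα0 : 0 < α := by linarith
  have hd1 : (1 : ℝ) ≤ d := by exact_mod_cast hd
  set D := (d : ℝ) / α ^ 2
  have hD : 0 < D := by positivity
  have hterm : ∀ n : ℕ, (if n = 0 then 0 else
      (n.divisors.card : ℝ) / (n : ℝ) ^ ((3 : ℝ) / 4) * min 1 ((d : ℝ) / (α ^ 2 * n))) =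
      (n.divisors.card : ℝ) * ((n : ℝ) ^ (-(3 / 4 : ℝ)) * min 1 (D / n)) := by
    intro n
    split_ifs with hn
    · simp [hn]
    · rw [Real.rpow_neg n.cast_nonneg, div_div, ← mul_assoc, div_eq_mul_inv]
  have hDpow : D ^ (1 - (3 / 4 : ℝ)) = α ^ (-(1 : ℝ) / 2) * (d : ℝ) ^ ((1 : ℝ) / 4) := by
    rw [Real.div_rpow (by positivity) (by positivity), ← Real.rpow_natCast,
      ← Real.rpow_mul hα0.le, neg_div, Real.rpow_neg hα0.le]
    norm_num
    ring
  have hharm : (harmonic ⌊D⌋₊ : ℝ) ≤ 1 + Real.log d :=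
    harmonic_floor_le_one_add_log_of_le hd (div_le_self (by positivity) (one_le_pow₀ hα))
  have hlog : 1 + Real.log d + (3 / 4 + 1) / (3 / 4) ≤ 5 * Real.log (2 * d) := by
    rw [Real.log_mul two_ne_zero (by positivity)]
    linarith [Real.log_two_gt_d9, Real.log_nonneg hd1]
  rw [tsum_congr hterm]
  refine (tsum_card_divisors_mul_rpow_neg_mul_min_le (by norm_num) (by norm_num) hD).trans ?_
  rw [hDpow]
  have hL : 0 ≤ Real.log (2 * d) := Real.log_nonneg (by linarith)
  have hpos : 0 ≤ α ^ (-(1 : ℝ) / 2) * (d : ℝ) ^ ((1 : ℝ) / 4) := by positivity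
  calc _ ≤ (1 / (1 - 3 / 4) + (3 / 4 + 1) / (3 / 4)) *
        (α ^ (-(1 : ℝ) / 2) * (d : ℝ) ^ ((1 : ℝ) / 4)) * (5 * Real.log (2 * d)) := by
        gcongr; linarith
    _ ≤ _ := by nlinarith [mul_nonneg hpos hL]
end
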